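/- arXiv:2310.18814 — 8 statements merged into one kernel-verified Lean document; each statement's English description precedes it below -/
import Mathlib

section
/- For every integer n ≥ 2, let p_n = 1 - (1 - 1/n)^n and q_n = (1 - 1/n)^{2n} - (1 - 2/n)^n. Then p_n/(1 - p_n) + q_n/(1 - p_n)^2 = ((1 - 1/n)^n - (1 - 2/n)^n)/(1 - 1/n)^{2n}, and this quantity is at most 16/e, hence strictly less than 6. -/
/-!
Writing `a = (1 - 1/n)^n` and `b = (1 - 2/n)^n`, so that `p = 1 - a` and `q = a^2 - b`, the quantity
is `(a - b)/a^2 ≤ 1/a` since `b ≥ 0`. The sequence `(1 - 1/n)^n` increases (Bernoulli's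
inequality), so `a ≥ (1 - 1/2)^2 = 1/4` and the quantity is at most `4 ≤ 16/e < 6`.
-/

open Real

theorem one_sub_div_add_sq_sub_div_sq {K : Type*} [Field K] {a : K} (ha : a ≠ 0) (b : K) :
    (1 - a) / (1 - (1 - a)) + (a ^ 2 - b) / (1 - (1 - a)) ^ 2 = (a - b) / a ^ 2 := by
  rw [sub_sub_cancel]
  field_simp
  ring

theorem sub_div_sq_le_inv {K : Type*} [Field K] [LinearOrder K] [IsStrictOrderedRing K]
    {a b : K} (ha : 0 < a) (hb : 0 ≤ b) : (a - b) / a ^ 2 ≤ a⁻¹ := by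
  rw [div_le_iff₀ (by positivity), sq, ← mul_assoc, inv_mul_cancel₀ ha.ne', one_mul]
  linarith

-- Bernoulli's inequality applied to `(1 - 1/(n+1)) / (1 - 1/n) = 1 + 1/(n^2 - 1)`.
theorem one_sub_inv_pow_le_succ {n : ℕ} (hn : 1 ≤ n) :
    (1 - 1 / (n : ℝ)) ^ n ≤ (1 - 1 / ((n + 1 : ℕ) : ℝ)) ^ (n + 1) := by
  rcases hn.eq_or_lt with rfl | hn
  · norm_num
  have hn : (2 : ℝ) ≤ n := by exact_mod_cast hn
  have hn2 : 0 < (n : ℝ) ^ 2 - 1 := by nlinarith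
  set u : ℝ := 1 - 1 / n with hu_def
  set v : ℝ := 1 - 1 / ((n + 1 : ℕ) : ℝ) with hv_def
  set t : ℝ := 1 / ((n : ℝ) ^ 2 - 1) with ht_def
  have hu : 0 ≤ u := by
    rw [hu_def, sub_nonneg, div_le_one (by positivity)]; linarith
  have hv : 0 ≤ v := by
    rw [hv_def, sub_nonneg, div_le_one (by positivity)]; push_cast; linarith
  have hv_eq : v = u * (1 + t) := by
    rw [hv_def, hu_def, ht_def]
    push_cast
    field_simp
    ring
  have hvt : 1 ≤ v * (1 + n * t) := by
    rw [hv_def, ht_def, ← sub_nonneg]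
    push_cast
    field_simp
    ring_nf
    positivity
  calc u ^ n ≤ u ^ n * (v * (1 + n * t)) := le_mul_of_one_le_right (by positivity) hvt
    _ ≤ u ^ n * (v * (1 + t) ^ n) := by
        gcongr
        exact one_add_mul_le_pow (by linarith [one_div_pos.2 hn2]) n
    _ = v ^ (n + 1) := by
        rw [pow_succ, hv_eq, mul_pow]; ring

theorem one_div_four_le_one_sub_inv_pow {n : ℕ} (hn : 2 ≤ n) :
    1 / 4 ≤ (1 - 1 / (n : ℝ)) ^ n := by
  have hmono : MonotoneOn (fun n : ℕ => (1 - 1 / (n : ℝ)) ^ n) (Set.Ici 1) :=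
    monotoneOn_nat_Ici_of_le_succ fun _ hk => one_sub_inv_pow_le_succ hk
  calc (1 : ℝ) / 4 = (1 - 1 / ((2 : ℕ) : ℝ)) ^ 2 := by norm_num
    _ ≤ (1 - 1 / (n : ℝ)) ^ n := hmono (by simp) (by simp; omega) hn

theorem four_le_sixteen_div_exp_one : (4 : ℝ) ≤ 16 / exp 1 := by
  rw [le_div_iff₀ (exp_pos 1)]
  linarith [exp_one_lt_d9]

theorem sixteen_div_exp_one_lt_six : 16 / exp 1 < 6 := by
  rw [div_lt_iff₀ (exp_pos 1)]
  linarith [exp_one_gt_d9]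

/-- For every integer `n ≥ 2`, with `p = 1 - (1 - 1/n)^n` and
`q = (1 - 1/n)^(2n) - (1 - 2/n)^n`, one has
`p/(1-p) + q/(1-p)^2 = ((1 - 1/n)^n - (1 - 2/n)^n)/(1 - 1/n)^(2n)`,
and this quantity is at most `16/e`, hence strictly less than `6`. -/
theorem stmt0 (n : ℕ) (hn : 2 ≤ n) (p q : ℝ)
    (hp : p = 1 - (1 - 1/(n:ℝ))^n)
    (hq : q = (1 - 1/(n:ℝ))^(2*n) - (1 - 2/(n:ℝ))^n) :
    p/(1-p) + q/(1-p)^2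
      = ((1 - 1/(n:ℝ))^n - (1 - 2/(n:ℝ))^n)/(1 - 1/(n:ℝ))^(2*n) ∧
    ((1 - 1/(n:ℝ))^n - (1 - 2/(n:ℝ))^n)/(1 - 1/(n:ℝ))^(2*n) ≤ 16 / Real.exp 1 ∧
    ((1 - 1/(n:ℝ))^n - (1 - 2/(n:ℝ))^n)/(1 - 1/(n:ℝ))^(2*n) < 6 := by
  have ha : 1 / 4 ≤ (1 - 1 / (n : ℝ)) ^ n := one_div_four_le_one_sub_inv_pow hn
  have hb : 0 ≤ (1 - 2 / (n : ℝ)) ^ n := by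
    have : (2 : ℝ) ≤ n := by exact_mod_cast hn
    exact pow_nonneg (by rw [sub_nonneg, div_le_one (by positivity)]; exact this) n
  subst hp hq
  rw [mul_comm 2 n, pow_mul]
  have hle : ((1 - 1 / (n : ℝ)) ^ n - (1 - 2 / (n : ℝ)) ^ n) / ((1 - 1 / (n : ℝ)) ^ n) ^ 2
      ≤ 16 / exp 1 :=
    calc _ ≤ ((1 - 1 / (n : ℝ)) ^ n)⁻¹ := sub_div_sq_le_inv (by linarith) hb
      _ ≤ 4 := inv_le_of_inv_le₀ (by norm_num) (by linarith)
      _ ≤ 16 / exp 1 := four_le_sixteen_div_exp_one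
  exact ⟨one_sub_div_add_sq_sub_div_sq (by positivity) _, hle,
    hle.trans_lt sixteen_div_exp_one_lt_six⟩
end

section
/- Fix real numbers p ∈ (0,1) and δ ∈ (0,1). Then the function B ↦ (p + (1 - p) δ^{1/B})^B is strictly decreasing on the interval (0, ∞) of real numbers B. -/
/-! With `r = 1/B`, the function is `B ↦ M_{1/B}`, where `M_r = (p + (1 - p) δ^r)^(1/r)` is the
weighted power mean of `1` and `δ`. Power means of two distinct points increase strictly with the
exponent (strict concavity of `t ↦ t^s` for `0 < s < 1`), and `B ↦ 1/B` is decreasing. -/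

open Set

theorem Real.strictMonoOn_weightedPowerMean_one {p x : ℝ} (hp : p ∈ Ioo (0 : ℝ) 1)
    (hx₀ : 0 ≤ x) (hx₁ : x ≠ 1) :
    StrictMonoOn (fun r : ℝ => (p + (1 - p) * x ^ r) ^ (1 / r)) (Ioi 0) := by
  intro r₁ (hr₁ : 0 < r₁) r₂ (hr₂ : 0 < r₂) hlt
  obtain ⟨hp₀, hp₁⟩ := hp
  have hs₀ : 0 < r₁ / r₂ := div_pos hr₁ hr₂
  have hs₁ : r₁ / r₂ < 1 := (div_lt_one hr₂).2 hlt
  have hy₀ : 0 ≤ x ^ r₂ := Real.rpow_nonneg hx₀ _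
  have hy₁ : x ^ r₂ ≠ 1 := fun h => hx₁ <| by
    rw [← Real.rpow_rpow_inv hx₀ hr₂.ne', h, Real.one_rpow]
  have hbase : 0 < p + (1 - p) * x ^ r₂ := by nlinarith
  have jensen : p + (1 - p) * x ^ r₁ < (p + (1 - p) * x ^ r₂) ^ (r₁ / r₂) := by
    have := (Real.strictConcaveOn_rpow hs₀ hs₁).2 (mem_Ici.2 zero_le_one) (mem_Ici.2 hy₀)
      hy₁.symm hp₀ (sub_pos.2 hp₁) (add_sub_cancel p 1)
    simp only [smul_eq_mul, Real.one_rpow, mul_one] at this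
    rwa [← Real.rpow_mul hx₀, mul_div_cancel₀ _ hr₂.ne'] at this
  calc (p + (1 - p) * x ^ r₁) ^ (1 / r₁)
      < ((p + (1 - p) * x ^ r₂) ^ (r₁ / r₂)) ^ (1 / r₁) :=
        Real.rpow_lt_rpow (by positivity) jensen (one_div_pos.2 hr₁)
    _ = (p + (1 - p) * x ^ r₂) ^ (1 / r₂) := by
        rw [← Real.rpow_mul hbase.le]
        field_simp

/-- Fix `p ∈ (0,1)` and `δ ∈ (0,1)`. Then the function
`B ↦ (p + (1 - p) δ^(1/B))^B` is strictly decreasing on `(0, ∞)` (real powers). -/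
theorem stmt5 (p δ : ℝ) (hp : p ∈ Set.Ioo (0:ℝ) 1) (hδ : δ ∈ Set.Ioo (0:ℝ) 1) :
    StrictAntiOn (fun B : ℝ => (p + (1 - p) * δ ^ (1/B)) ^ B) (Set.Ioi (0:ℝ)) := by
  intro B₁ (hB₁ : 0 < B₁) B₂ (hB₂ : 0 < B₂) hlt
  have := Real.strictMonoOn_weightedPowerMean_one hp hδ.1.le hδ.2.ne
    (one_div_pos.2 hB₂) (one_div_pos.2 hB₁) (one_div_lt_one_div_of_lt hB₁ hlt)
  simpa only [one_div_one_div] using this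
end

section
/- Let W_1, W_2, ... be i.i.d. integrable real random variables such that W_1 is sub-gamma on the right tail with parameters (σ², c) where c > 0. Let M_n = max_{1 ≤ i ≤ n} W_i and suppose there exists a real number a with 0 < a ≤ c such that E[M_n] / ln n → a as n → ∞. Then for every λ > c/a, lim_{n→∞} P(M_n > λ E[M_n]) = 0. -/
/-!
Fix `b, ρ > 1` with `b ρ < λ`, possible since `λ > c / a ≥ 1`, and write `E n = E[M_n]`, so that
`E n → ∞`. Markov's inequality (applied to `M_n + |W_0| ≥ 0`) keeps `P(M_n ≤ b E n)` above a
constant `δ > 0`, and `P(M_n ≤ x) = P(W_0 ≤ x)^n` then forces `P(W_0 > b E n) ≤ -log δ / n`.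
For `m = ⌈n^ρ⌉` we have `E m ≈ a ρ log n < (λ / b) a log n ≈ (λ / b) E n`, so the union bound
gives `P(M_n > λ E n) ≤ n P(W_0 > b E m) ≤ -log δ · n / m → 0`.
-/

open MeasureTheory ProbabilityTheory Filter Topology

theorem abs_ciSup_le_sum_abs {ι : Type*} [Fintype ι] (f : ι → ℝ) :
    |⨆ i, f i| ≤ ∑ i, |f i| := by
  have hle : ∀ i, |f i| ≤ ∑ j, |f j| := fun i =>
    Finset.single_le_sum (fun j _ => abs_nonneg (f j)) (Finset.mem_univ i)
  cases isEmpty_or_nonempty ι with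
  | inl _ => simp
  | inr _ =>
    obtain ⟨i₀⟩ : Nonempty ι := ‹_›
    refine abs_le.mpr ⟨?_, ciSup_le fun i => (le_abs_self _).trans (hle i)⟩
    calc -∑ j, |f j| ≤ -|f i₀| := neg_le_neg (hle i₀)
      _ ≤ f i₀ := neg_abs_le _
      _ ≤ ⨆ i, f i := le_ciSup (Finite.bddAbove_range f) i₀

section FiniteMax

variable {Ω ι : Type*} [MeasurableSpace Ω] {P : Measure Ω} [Fintype ι] {X : ι → Ω → ℝ}

theorem integrable_iSup_of_fintype (hX : ∀ i, Integrable (X i) P) :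
    Integrable (fun ω => ⨆ i, X i ω) P :=
  (integrable_finsetSum Finset.univ fun i _ => (hX i).abs).mono'
    (AEMeasurable.iSup fun i => (hX i).aemeasurable).aestronglyMeasurable
    (ae_of_all _ fun ω => abs_ciSup_le_sum_abs fun i => X i ω)

variable [Nonempty ι] {Y : Ω → ℝ}

theorem measureReal_lt_iSup_le (hident : ∀ i, IdentDistrib (X i) Y P P) (t : ℝ) :
    P.real {ω | t < ⨆ i, X i ω} ≤ Fintype.card ι * P.real {ω | t < Y ω} := by
  have hunion : {ω | t < ⨆ i, X i ω} = ⋃ i, X i ⁻¹' Set.Ioi t := by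
    ext ω
    simp [lt_ciSup_iff (Finite.bddAbove_range fun i => X i ω)]
  have heach : ∀ i, P.real (X i ⁻¹' Set.Ioi t) = P.real {ω | t < Y ω} := fun i =>
    congrArg ENNReal.toReal ((hident i).measure_mem_eq measurableSet_Ioi)
  calc P.real {ω | t < ⨆ i, X i ω} ≤ ∑ i, P.real (X i ⁻¹' Set.Ioi t) :=
        hunion ▸ measureReal_iUnion_fintype_le _
    _ = Fintype.card ι * P.real {ω | t < Y ω} := by
        simp only [heach, Finset.sum_const, Finset.card_univ, nsmul_eq_mul]

theorem measureReal_iSup_le_eq_pow (hindep : iIndepFun X P)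
    (hident : ∀ i, IdentDistrib (X i) Y P P) (t : ℝ) :
    P.real {ω | ⨆ i, X i ω ≤ t} = P.real {ω | Y ω ≤ t} ^ Fintype.card ι := by
  have hinter : {ω | ⨆ i, X i ω ≤ t} = ⋂ i, X i ⁻¹' Set.Iic t := by
    ext ω
    simp [ciSup_le_iff (Finite.bddAbove_range fun i => X i ω)]
  have heach : ∀ i, P (X i ⁻¹' Set.Iic t) = P {ω | Y ω ≤ t} := fun i =>
    (hident i).measure_mem_eq measurableSet_Iic
  rw [measureReal_def, hinter, hindep.meas_iInter fun i => ⟨_, measurableSet_Iic, rfl⟩]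
  simp only [heach, Finset.prod_const, Finset.card_univ, ENNReal.toReal_pow, measureReal_def]

end FiniteMax

theorem mul_measureReal_lt_le_integral_add {Ω : Type*} [MeasurableSpace Ω] {P : Measure Ω}
    [IsFiniteMeasure P] {X Y : Ω → ℝ} (hX : Integrable X P) (hY : Integrable Y P)
    (hY0 : ∀ ω, 0 ≤ Y ω) (hXY : ∀ ω, 0 ≤ X ω + Y ω) {t : ℝ} (ht : 0 ≤ t) :
    t * P.real {ω | t < X ω} ≤ ∫ ω, X ω ∂P + ∫ ω, Y ω ∂P := by
  have hsub : {ω | t < X ω} ⊆ {ω | t ≤ X ω + Y ω} := fun ω hω => by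
    have := hY0 ω
    simp only [Set.mem_ofPred_eq] at hω ⊢
    linarith
  calc t * P.real {ω | t < X ω} ≤ t * P.real {ω | t ≤ X ω + Y ω} :=
        mul_le_mul_of_nonneg_left (measureReal_mono hsub) ht
    _ ≤ ∫ ω, X ω + Y ω ∂P := mul_meas_ge_le_integral_of_nonneg (ae_of_all _ hXY) (hX.add hY) t
    _ = ∫ ω, X ω ∂P + ∫ ω, Y ω ∂P := integral_add hX hY

theorem one_sub_le_neg_log_div_of_le_pow {q δ : ℝ} {n : ℕ} (hn : n ≠ 0) (hq : 0 ≤ q)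
    (hδ : 0 < δ) (h : δ ≤ q ^ n) : 1 - q ≤ -Real.log δ / n := by
  have hq0 : 0 < q := hq.lt_of_ne fun hq0 => by
    rw [← hq0, zero_pow hn] at h
    exact hδ.not_ge h
  have hlog : Real.log δ ≤ n * Real.log q := by
    simpa only [Real.log_pow] using Real.log_le_log hδ h
  rw [le_div_iff₀ (by positivity)]
  nlinarith [Real.log_le_sub_one_of_pos hq0]

theorem tendsto_atTop_of_tendsto_div_log {E : ℕ → ℝ} {a : ℝ} (ha0 : 0 < a)
    (ha : Tendsto (fun n : ℕ => E n / Real.log n) atTop (𝓝 a)) : Tendsto E atTop atTop := by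
  refine (ha.pos_mul_atTop ha0 (Real.tendsto_log_atTop.comp tendsto_natCast_atTop_atTop)).congr' ?_
  filter_upwards [eventually_ge_atTop 2] with n hn
  have : Real.log n ≠ 0 := (Real.log_pos (by exact_mod_cast hn)).ne'
  exact div_mul_cancel₀ (E n) this

theorem tendsto_log_natCeil_rpow_div_log {ρ : ℝ} (hρ : 0 < ρ) :
    Tendsto (fun n : ℕ => Real.log ⌈(n : ℝ) ^ ρ⌉₊ / Real.log n) atTop (𝓝 ρ) := by
  have hlog : Tendsto (fun n : ℕ => Real.log n) atTop atTop :=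
    Real.tendsto_log_atTop.comp tendsto_natCast_atTop_atTop
  have hupper : Tendsto (fun n : ℕ => ρ + Real.log 2 / Real.log n) atTop (𝓝 ρ) := by
    simpa using tendsto_const_nhds.add (hlog.const_div_atTop (Real.log 2))
  refine tendsto_of_tendsto_of_tendsto_of_le_of_le' tendsto_const_nhds hupper ?_ ?_
  all_goals
    filter_upwards [eventually_ge_atTop 2] with n hn
    have hn1 : (1 : ℝ) < n := by exact_mod_cast hn
    have hlogn : 0 < Real.log n := Real.log_pos hn1
    have hpow : 1 ≤ (n : ℝ) ^ ρ := Real.one_le_rpow hn1.le hρ.le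
    have hceil : (n : ℝ) ^ ρ ≤ ⌈(n : ℝ) ^ ρ⌉₊ := Nat.le_ceil _
    have hlogpow : Real.log ((n : ℝ) ^ ρ) = ρ * Real.log n := Real.log_rpow (by linarith) ρ
  · rw [le_div_iff₀ hlogn, ← hlogpow]
    exact Real.log_le_log (by linarith) hceil
  · rw [div_le_iff₀ hlogn, add_mul, div_mul_cancel₀ _ hlogn.ne', ← hlogpow,
      ← Real.log_mul (by positivity) two_ne_zero]
    refine Real.log_le_log (by linarith) ?_
    linarith [Nat.ceil_lt_add_one (by linarith : (0:ℝ) ≤ (n : ℝ) ^ ρ)]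

theorem tendsto_natCast_div_natCeil_rpow {ρ : ℝ} (hρ : 1 < ρ) :
    Tendsto (fun n : ℕ => (n : ℝ) / ⌈(n : ℝ) ^ ρ⌉₊) atTop (𝓝 0) := by
  have hlim : Tendsto (fun n : ℕ => (n : ℝ) ^ (-(ρ - 1))) atTop (𝓝 0) :=
    (tendsto_rpow_neg_atTop (by linarith)).comp tendsto_natCast_atTop_atTop
  refine squeeze_zero' (Eventually.of_forall fun n => by positivity) ?_ hlim
  filter_upwards [eventually_ge_atTop 1] with n hn
  have hn0 : (0 : ℝ) < n := by exact_mod_cast hn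
  rw [neg_sub, Real.rpow_sub hn0, Real.rpow_one]
  exact div_le_div_of_nonneg_left hn0.le (by positivity) (Nat.le_ceil _)

theorem tendsto_natCast_mul_of_eventually_le_div {E : ℕ → ℝ} {f : ℝ → ℝ} {a b ρ lam K : ℝ}
    (ha0 : 0 < a) (ha : Tendsto (fun n : ℕ => E n / Real.log n) atTop (𝓝 a))
    (hf : Antitone f) (hf0 : ∀ x, 0 ≤ f x) (hρ : 1 < ρ) (hbρ : b * ρ < lam)
    (hK : ∀ᶠ m : ℕ in atTop, f (b * E m) ≤ K / m) :
    Tendsto (fun n : ℕ => n * f (lam * E n)) atTop (𝓝 0) := by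
  set m : ℕ → ℕ := fun n => ⌈(n : ℝ) ^ ρ⌉₊
  have hm : Tendsto m atTop atTop := tendsto_nat_ceil_atTop.comp
    ((tendsto_rpow_atTop (by linarith)).comp tendsto_natCast_atTop_atTop)
  have hratio : Tendsto (fun n : ℕ => b * E (m n) / Real.log n) atTop (𝓝 (b * (a * ρ))) := by
    refine ((ha.comp hm).mul (tendsto_log_natCeil_rpow_div_log (by linarith))).const_mul b
      |>.congr' ?_
    filter_upwards [hm.eventually_ge_atTop 2] with n hn
    have : Real.log (m n) ≠ 0 := (Real.log_pos (by exact_mod_cast hn)).ne'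
    show b * (E (m n) / Real.log (m n) * (Real.log (m n) / Real.log n)) = b * E (m n) / Real.log n
    rw [div_mul_div_cancel₀ this, mul_div_assoc]
  have hcompare : ∀ᶠ n : ℕ in atTop, b * E (m n) ≤ lam * E n := by
    have hlt := hratio.eventually_lt ((ha.const_mul lam).congr fun n => (mul_div_assoc ..).symm)
      (by nlinarith)
    filter_upwards [hlt, eventually_ge_atTop 2] with n hn hn2
    have hlogn : 0 < Real.log n := Real.log_pos (by exact_mod_cast hn2)
    exact ((div_lt_div_iff_of_pos_right hlogn).mp hn).le
  have hbound : ∀ᶠ n : ℕ in atTop, n * f (lam * E n) ≤ K * (n / m n) := by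
    filter_upwards [hcompare, hm.eventually hK] with n hn hKn
    calc n * f (lam * E n) ≤ n * (K / m n) :=
          mul_le_mul_of_nonneg_left ((hf hn).trans hKn) (Nat.cast_nonneg n)
      _ = K * (n / m n) := by ring
  refine squeeze_zero' (Eventually.of_forall fun n => mul_nonneg (Nat.cast_nonneg n) (hf0 _))
    hbound ?_
  simpa using (tendsto_natCast_div_natCeil_rpow hρ).const_mul K

section IIDMax

variable {Ω : Type*} [MeasurableSpace Ω] {P : Measure Ω} [IsProbabilityMeasure P]
  {W : ℕ → Ω → ℝ}

theorem eventually_le_measureReal_iSup_le (hident : ∀ i, IdentDistrib (W i) (W 0) P P)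
    (hint : Integrable (W 0) P)
    (hE : Tendsto (fun n : ℕ => ∫ ω, (⨆ i : Fin n, W i ω) ∂P) atTop atTop) {b : ℝ} (hb : 1 < b) :
    ∀ᶠ n : ℕ in atTop, (b - 1) / (2 * b) ≤
      P.real {ω | ⨆ i : Fin n, W i ω ≤ b * ∫ ω', (⨆ i : Fin n, W i ω') ∂P} := by
  set C := ∫ ω, |W 0 ω| ∂P
  filter_upwards [eventually_ge_atTop 1, hE.eventually_gt_atTop 0,
    hE.eventually_ge_atTop (2 * C / (b - 1))] with n hn hpos hC
  set E := ∫ ω, (⨆ i : Fin n, W i ω) ∂P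
  have hM : Integrable (fun ω => ⨆ i : Fin n, W i ω) P :=
    integrable_iSup_of_fintype fun i => (hident i).integrable_iff.mpr hint
  have hbelow : ∀ ω, 0 ≤ (⨆ i : Fin n, W i ω) + |W 0 ω| := fun ω => by
    have := le_ciSup (Finite.bddAbove_range fun i : Fin n => W i ω) ⟨0, hn⟩
    linarith [neg_abs_le (W 0 ω)]
  have hmarkov := mul_measureReal_lt_le_integral_add hM hint.abs (fun ω => abs_nonneg _) hbelow
    (t := b * E) (by positivity)
  have hcompl : P.real {ω | ⨆ i : Fin n, W i ω ≤ b * E}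
      = 1 - P.real {ω | b * E < ⨆ i : Fin n, W i ω} := by
    rw [← probReal_compl_eq_one_sub₀ (nullMeasurableSet_lt aemeasurable_const hM.aemeasurable)]
    congr 1
    ext ω
    simp
  have hC' : 2 * C ≤ E * (b - 1) := (div_le_iff₀ (by linarith)).mp hC
  have hprob : 2 * b * P.real {ω | b * E < ⨆ i : Fin n, W i ω} ≤ b + 1 :=
    le_of_mul_le_mul_right (by nlinarith) hpos
  rw [hcompl, div_le_iff₀ (by positivity)]
  linarith

theorem exists_eventually_measureReal_lt_le_div (hindep : iIndepFun W P)
    (hident : ∀ i, IdentDistrib (W i) (W 0) P P) (hint : Integrable (W 0) P)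
    (hE : Tendsto (fun n : ℕ => ∫ ω, (⨆ i : Fin n, W i ω) ∂P) atTop atTop) {b : ℝ} (hb : 1 < b) :
    ∃ K, ∀ᶠ n : ℕ in atTop,
      P.real {ω | b * ∫ ω', (⨆ i : Fin n, W i ω') ∂P < W 0 ω} ≤ K / n := by
  refine ⟨-Real.log ((b - 1) / (2 * b)), ?_⟩
  filter_upwards [eventually_le_measureReal_iSup_le hident hint hE hb, eventually_ne_atTop 0]
    with n hδ hn
  have : NeZero n := ⟨hn⟩
  set t := b * ∫ ω', (⨆ i : Fin n, W i ω') ∂P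
  rw [measureReal_iSup_le_eq_pow (X := fun i : Fin n => W i) (hindep.precomp Fin.val_injective)
    (fun i => hident i), Fintype.card_fin] at hδ
  have hcompl : P.real {ω | t < W 0 ω} = 1 - P.real {ω | W 0 ω ≤ t} := by
    rw [← probReal_compl_eq_one_sub₀ (nullMeasurableSet_le hint.aemeasurable aemeasurable_const)]
    congr 1
    ext ω
    simp
  rw [hcompl]
  exact one_sub_le_neg_log_div_of_le_pow hn measureReal_nonneg
    (div_pos (by linarith) (by linarith)) hδ

end IIDMax

theorem stmt9_general {Ω : Type*} [MeasurableSpace Ω] (P : Measure Ω) [IsProbabilityMeasure P]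
    (W : ℕ → Ω → ℝ)
    (hindep : iIndepFun W P)
    (hident : ∀ i, IdentDistrib (W i) (W 0) P P)
    (hint : Integrable (W 0) P)
    (c : ℝ)
    (a : ℝ) (ha0 : 0 < a) (hac : a ≤ c)
    (ha : Tendsto (fun n : ℕ => (∫ ω, (⨆ i : Fin n, W i ω) ∂P) / Real.log n)
      atTop (nhds a))
    (lam : ℝ) (hlam : c / a < lam) :
    Tendsto
      (fun n : ℕ =>
        (P {ω | lam * ∫ ω', (⨆ i : Fin n, W i ω') ∂P < ⨆ i : Fin n, W i ω}).toReal)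
      atTop (nhds 0) := by
  have hlam1 : 1 < lam := ((one_le_div ha0).mpr hac).trans_lt hlam
  obtain ⟨ν, hν1, hνlam⟩ := exists_between hlam1
  have hb : 1 < √ν := Real.lt_sqrt_of_sq_lt (by simpa using hν1)
  have hbb : √ν * √ν < lam := by rwa [Real.mul_self_sqrt (by linarith)]
  obtain ⟨K, hK⟩ := exists_eventually_measureReal_lt_le_div hindep hident hint
    (tendsto_atTop_of_tendsto_div_log ha0 ha) hb
  have htail := tendsto_natCast_mul_of_eventually_le_div (f := fun x => P.real {ω | x < W 0 ω})
    ha0 ha (fun x y hxy => measureReal_mono fun ω hω => hxy.trans_lt hω)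
    (fun _ => measureReal_nonneg) hb hbb hK
  refine squeeze_zero' (Eventually.of_forall fun n => ENNReal.toReal_nonneg) ?_ htail
  filter_upwards [eventually_ne_atTop 0] with n hn
  have : NeZero n := ⟨hn⟩
  have hunion := measureReal_lt_iSup_le (X := fun i : Fin n => W i) (fun i => hident i)
    (lam * ∫ ω', (⨆ i : Fin n, W i ω') ∂P)
  rwa [Fintype.card_fin] at hunion

/-- Let `W 0, W 1, ...` be i.i.d. integrable real random variables such that
`W 0` is sub-gamma on the right tail with parameters `(σ², c)`, `c > 0`, i.e.
`log E[exp(s (W 0 - E[W 0]))] ≤ s² σ² / (2 (1 - c s))` for all `s ∈ (0, 1/c)`.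
Let `M n = max_{0 ≤ i < n} W i` (written as a supremum over `Fin n`) and suppose there is
`a` with `0 < a ≤ c` such that `E[M n] / log n → a`. Then for every `λ > c/a`,
`P(M n > λ E[M n]) → 0` as `n → ∞`. -/
theorem stmt9 {Ω : Type*} [MeasurableSpace Ω] (P : Measure Ω) [IsProbabilityMeasure P]
    (W : ℕ → Ω → ℝ) (hmeas : ∀ i, Measurable (W i))
    (hindep : iIndepFun W P)
    (hident : ∀ i, IdentDistrib (W i) (W 0) P P)
    (hint : Integrable (W 0) P)
    (σ2 c : ℝ) (hσ2 : 0 ≤ σ2) (hc : 0 < c)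
    (hsubgamma : ∀ s : ℝ, 0 < s → s < 1/c →
      Real.log (∫ ω, Real.exp (s * (W 0 ω - ∫ ω', W 0 ω' ∂P)) ∂P)
        ≤ s^2 * σ2 / (2 * (1 - c * s)))
    (a : ℝ) (ha0 : 0 < a) (hac : a ≤ c)
    (ha : Tendsto (fun n : ℕ => (∫ ω, (⨆ i : Fin n, W i ω) ∂P) / Real.log n)
      atTop (nhds a))
    (lam : ℝ) (hlam : c / a < lam) :
    Tendsto
      (fun n : ℕ =>
        (P {ω | lam * ∫ ω', (⨆ i : Fin n, W i ω') ∂P < ⨆ i : Fin n, W i ω}).toReal)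
      atTop (nhds 0) :=
  stmt9_general P W hindep hident hint c a ha0 hac ha lam hlam
end

section
/- Let n ≥ 1 and let (r_1, ..., r_{n+1}) be an exchangeable random vector of real random variables, i.e., its joint law is invariant under every permutation of the n+1 coordinates. Let α ∈ (1/(n+1), 1) and let k = ⌈(1 − α)(n + 1)⌉. Then P(r_{n+1} ≤ r_{(k)}) ≥ 1 − α, where r_{(k)} denotes the k-th smallest value among r_1, ..., r_n. -/
/-!
Call the number of coordinates strictly smaller than `x j` the rank of `j`. For every
realisation, at least `k` of the `n + 1` coordinates have rank `< k` (tied values share the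
smallest rank), and `r (last) ≤ r_(k)` says exactly that the last coordinate has rank `< k`.
By exchangeability the `n + 1` events `{rank j < k}` are equally likely, so
`(n + 1) P(r (last) ≤ r_(k)) ≥ k ≥ (1 - α)(n + 1)`.
-/

open MeasureTheory

/-- The `k`-th smallest value (1-indexed) among `v 0, ..., v (n-1)`. -/
noncomputable def kthSmallest {n : ℕ} (k : ℕ) (v : Fin n → ℝ) : ℝ :=
  (Multiset.sort (Multiset.map v Finset.univ.val) (· ≤ ·)).getD (k - 1) 0

open Finset
open scoped ENNReal

theorem List.Pairwise.getElem_lt_iff_lt_countP {α : Type*} [LinearOrder α] {L : List α}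
    (hL : L.Pairwise (· ≤ ·)) {i : ℕ} (hi : i < L.length) (t : α) :
    L[i] < t ↔ i < L.countP (· < t) := by
  induction L generalizing i with
  | nil => simp at hi
  | cons a L ih =>
    obtain ⟨ha, hL⟩ := List.pairwise_cons.mp hL
    by_cases hat : a < t
    · rcases i with _ | i
      · simp [hat]
      · simpa [List.countP_cons, hat] using ih hL (Nat.lt_of_succ_lt_succ hi)
    · have hL0 : L.countP (· < t) = 0 :=
        List.countP_eq_zero.mpr fun b hb => by simpa using (not_lt.mp hat).trans (ha b hb)
      rcases i with _ | i
      · simp [hat, hL0]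
      · simpa [List.countP_cons, hat, hL0] using (not_lt.mp hat).trans (ha _ (List.getElem_mem _))

theorem countP_sort_map_univ {ι α : Type*} [Fintype ι] [LinearOrder α] (v : ι → α)
    (p : α → Prop) [DecidablePred p] :
    (Multiset.sort (univ.val.map v) (· ≤ ·)).countP (p ·) = #{i | p (v i)} := by
  rw [← Multiset.coe_countP, Multiset.sort_eq, Multiset.countP_map]
  rfl

theorem le_kthSmallest_iff {n k : ℕ} (hk1 : 1 ≤ k) (hkn : k ≤ n) (v : Fin n → ℝ) (t : ℝ) :
    t ≤ kthSmallest k v ↔ #{i | v i < t} < k := by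
  set L := Multiset.sort (univ.val.map v) (· ≤ ·)
  have hk : k - 1 < L.length := by simp [L]; omega
  rw [kthSmallest, List.getD_eq_getElem _ _ hk, ← not_lt,
    (Multiset.pairwise_sort _ _).getElem_lt_iff_lt_countP hk, countP_sort_map_univ]
  omega

section Rank

variable {ι α : Type*} [Fintype ι] [LinearOrder α]

def rank (x : ι → α) (j : ι) : ℕ := #{i | x i < x j}

theorem rank_comp_equiv {κ : Type*} [Fintype κ] (x : ι → α) (e : κ ≃ ι) (j : κ) :
    rank (x ∘ e) j = rank x (e j) := by
  simp only [rank, card_filter]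
  exact e.sum_comp fun i => if x i < x (e j) then 1 else 0

theorem rank_last {n : ℕ} (x : Fin (n + 1) → α) :
    rank x (Fin.last n) = #{i : Fin n | x i.castSucc < x (Fin.last n)} := by
  rw [rank, card_filter, card_filter, Fin.sum_univ_castSucc]
  simp

/- Every coordinate strictly below the smallest coordinate of rank `≥ k` has rank `< k`, so that
smallest coordinate has rank at most `#{j | rank x j < k}`. -/
theorem le_card_filter_rank_lt (x : ι → α) {k : ℕ} (hk : k ≤ Fintype.card ι) :
    k ≤ #{j | rank x j < k} := by
  rcases ({j | k ≤ rank x j} : Finset ι).eq_empty_or_nonempty with h | h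
  · rw [filter_true_of_mem fun j _ => not_le.mp (filter_eq_empty_iff.mp h (mem_univ j))]
    exact hk
  · obtain ⟨j, hj, hmin⟩ := exists_min_image _ x h
    have hsub : ({i | x i < x j} : Finset ι) ⊆ ({i | rank x i < k} : Finset ι) := fun i hi => by
      simp only [mem_filter, mem_univ, true_and] at hi ⊢
      by_contra hik
      exact (hmin i (by simpa using hik)).not_gt hi
    exact (mem_filter.mp hj).2.trans (card_le_card hsub)

theorem measurable_rank [MeasurableSpace α] [TopologicalSpace α] [OrderClosedTopology α]
    [SecondCountableTopology α] [OpensMeasurableSpace α] (j : ι) :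
    Measurable fun x : ι → α => rank x j := by
  simp only [rank, card_filter]
  exact Finset.measurable_sum _ fun i _ =>
    Measurable.ite (measurableSet_lt (measurable_pi_apply i) (measurable_pi_apply j))
      measurable_const measurable_const

end Rank

theorem mul_measure_univ_le_sum_measure {Ω ι : Type*} [MeasurableSpace Ω] [Fintype ι]
    (μ : Measure Ω) {A : ι → Set Ω} [∀ ω i, Decidable (ω ∈ A i)] (hA : ∀ i, MeasurableSet (A i))
    {k : ℕ} (hk : ∀ ω, k ≤ #{i | ω ∈ A i}) :
    k * μ Set.univ ≤ ∑ i, μ (A i) := calc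
  k * μ Set.univ = ∫⁻ _, (k : ℝ≥0∞) ∂μ := (lintegral_const _).symm
  _ ≤ ∫⁻ ω, ∑ i, (A i).indicator 1 ω ∂μ := lintegral_mono fun ω => by
    simpa [Set.indicator_apply, Finset.sum_boole] using hk ω
  _ = ∑ i, μ (A i) := by
    rw [lintegral_finsetSum _ fun i _ => measurable_one.indicator (hA i)]
    simp [lintegral_indicator_one (hA _)]

section Exchangeable

variable {Ω ι : Type*} [MeasurableSpace Ω] [Fintype ι] [DecidableEq ι] {P : Measure Ω}
  {X : Ω → ι → ℝ}

theorem measure_rank_lt_eq_of_exchangeable (hX : Measurable X)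
    (hexch : ∀ σ : Equiv.Perm ι, P.map (fun ω => X ω ∘ σ) = P.map X) (k : ℕ) (i j : ι) :
    P {ω | rank (X ω) i < k} = P {ω | rank (X ω) j < k} := by
  have hσX : Measurable fun ω => X ω ∘ Equiv.swap i j := by fun_prop
  have hpre : {ω | rank (X ω) i < k} =
      (fun ω => X ω ∘ Equiv.swap i j) ⁻¹' {x | rank x j < k} := by
    ext ω
    simp [rank_comp_equiv]
  have hB : MeasurableSet {x : ι → ℝ | rank x j < k} := measurable_rank j measurableSet_Iio
  rw [hpre, ← Measure.map_apply hσX hB, hexch, Measure.map_apply hX hB]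
  rfl

theorem le_card_mul_measureReal_rank_lt [IsProbabilityMeasure P] (hX : Measurable X)
    (hexch : ∀ σ : Equiv.Perm ι, P.map (fun ω => X ω ∘ σ) = P.map X) {k : ℕ}
    (hk : k ≤ Fintype.card ι) (j : ι) :
    (k : ℝ) ≤ Fintype.card ι * P.real {ω | rank (X ω) j < k} := by
  have hA : ∀ i, MeasurableSet {ω | rank (X ω) i < k} := fun i =>
    (measurable_rank i).comp hX measurableSet_Iio
  have hsum := mul_measure_univ_le_sum_measure P hA fun ω => le_card_filter_rank_lt (X ω) hk
  simp only [measure_univ, mul_one, measure_rank_lt_eq_of_exchangeable hX hexch k _ j,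
    sum_const, card_univ, nsmul_eq_mul] at hsum
  have := ENNReal.toReal_mono (by finiteness) hsum
  simpa [measureReal_def] using this

end Exchangeable

theorem stmt12_general {Ω : Type*} [MeasurableSpace Ω] (P : Measure Ω) [IsProbabilityMeasure P]
    (n : ℕ) (r : Fin (n+1) → Ω → ℝ)
    (hmeas : ∀ i, Measurable (r i))
    (hexch : ∀ σ : Equiv.Perm (Fin (n+1)),
      P.map (fun ω => fun i => r (σ i) ω) = P.map (fun ω => fun i => r i ω))
    (α : ℝ) (hα : α ∈ Set.Ioo (1/((n:ℝ)+1)) 1) :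
    1 - α ≤
      (P {ω | r (Fin.last n) ω ≤
        kthSmallest ⌈(1 - α) * ((n:ℝ)+1)⌉₊ (fun i : Fin n => r i.castSucc ω)}).toReal := by
  obtain ⟨hα1, hα2⟩ := hα
  set k := ⌈(1 - α) * ((n:ℝ)+1)⌉₊
  have hpos : (0:ℝ) < n + 1 := by positivity
  have hk1 : 1 ≤ k := Nat.one_le_ceil_iff.mpr (mul_pos (sub_pos.mpr hα2) hpos)
  have hkn : k ≤ n := Nat.ceil_le.mpr (by rw [div_lt_iff₀ hpos] at hα1; linarith)
  set X : Ω → Fin (n+1) → ℝ := fun ω i => r i ω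
  have hevent : {ω | r (Fin.last n) ω ≤ kthSmallest k (fun i : Fin n => r i.castSucc ω)} =
      {ω | rank (X ω) (Fin.last n) < k} := by
    ext ω
    simp [le_kthSmallest_iff hk1 hkn, rank_last, X]
  have hbound := le_card_mul_measureReal_rank_lt (measurable_pi_lambda _ hmeas) hexch
    (k := k) (by simp; omega) (Fin.last n)
  rw [hevent, ← measureReal_def]
  simp only [Fintype.card_fin, Nat.cast_add, Nat.cast_one] at hbound
  nlinarith [Nat.le_ceil ((1 - α) * ((n:ℝ)+1))]

/-- Let `(r 0, ..., r n)` be an exchangeable random vector of `n+1` real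
random variables, `α ∈ (1/(n+1), 1)` and `k = ⌈(1 − α)(n + 1)⌉`. Then
`P(r (last) ≤ r_(k)) ≥ 1 − α`, where `r_(k)` is the `k`-th smallest among the first `n`
coordinates. -/
theorem stmt12 {Ω : Type*} [MeasurableSpace Ω] (P : Measure Ω) [IsProbabilityMeasure P]
    (n : ℕ) (hn : 1 ≤ n) (r : Fin (n+1) → Ω → ℝ)
    (hmeas : ∀ i, Measurable (r i))
    (hexch : ∀ σ : Equiv.Perm (Fin (n+1)),
      P.map (fun ω => fun i => r (σ i) ω) = P.map (fun ω => fun i => r i ω))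
    (α : ℝ) (hα : α ∈ Set.Ioo (1/((n:ℝ)+1)) 1) :
    1 - α ≤
      (P {ω | r (Fin.last n) ω ≤
        kthSmallest ⌈(1 - α) * ((n:ℝ)+1)⌉₊ (fun i : Fin n => r i.castSucc ω)}).toReal :=
  stmt12_general P n r hmeas hexch α hα
end

section
/- Let n ≥ 1 and let (a_i, b_i), i ∈ {1, ..., n}, be pairs of real numbers; let a_(1) ≤ ... ≤ a_(n) and b_(1) ≤ ... ≤ b_(n) denote the two sorted lists, and let ε ∈ ℝ. (i) If j, k ∈ {1, ..., n} satisfy b_(k) > a_(j) + ε, then the number of indices i with b_i > a_i + ε is at least j − k + 1. (ii) In particular, if α ∈ (0,1), δ ∈ [0, α), k = ⌈(n + 1)(1 − α)⌉ and j = ⌈(n + 1)(1 − α + δ)⌉, then j − k + 1 ≥ (n + 1)δ. -/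
open Finset

namespace List

variable {α : Type*} [Preorder α] [DecidableLE α] {l : List α}

theorem Pairwise.succ_le_countP_le_getElem (hl : l.Pairwise (· ≤ ·)) (m : ℕ)
    (hm : m < l.length) : m + 1 ≤ l.countP (fun x => x ≤ l[m]) := by
  have htake : (l.take (m + 1)).countP (fun x => x ≤ l[m]) = m + 1 := by
    rw [countP_eq_length.mpr, length_take_of_le hm]
    intro x hx
    obtain ⟨i, hi, rfl⟩ := mem_take_iff_getElem.mp hx
    simpa using hl.rel_get_of_le (a := ⟨i, by omega⟩) (b := ⟨m, hm⟩) (by simp; omega)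
  exact htake ▸ (take_sublist _ _).countP_le

theorem Pairwise.length_sub_le_countP_getElem_le (hl : l.Pairwise (· ≤ ·)) (m : ℕ)
    (hm : m < l.length) : l.length - m ≤ l.countP (fun x => l[m] ≤ x) := by
  have hdrop : (l.drop m).countP (fun x => l[m] ≤ x) = l.length - m := by
    rw [countP_eq_length.mpr, length_drop]
    intro x hx
    obtain ⟨i, hi, rfl⟩ := mem_drop_iff_getElem.mp hx
    simpa using hl.rel_get_of_le (a := ⟨m, hm⟩) (b := ⟨m + i, by omega⟩) (by simp)
  exact hdrop ▸ (drop_sublist _ _).countP_le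

end List

section kthSmallest

variable {n : ℕ} (v : Fin n → ℝ)

noncomputable def sortedValues : List ℝ :=
  Multiset.sort (Multiset.map v Finset.univ.val) (· ≤ ·)

theorem length_sortedValues : (sortedValues v).length = n := by
  simp [sortedValues]

theorem pairwise_sortedValues : (sortedValues v).Pairwise (· ≤ ·) :=
  Multiset.pairwise_sort _ _

theorem kthSmallest_eq_getElem {k : ℕ} (hk : 1 ≤ k) (hkn : k ≤ n) :
    kthSmallest k v = (sortedValues v)[k - 1]'(by rw [length_sortedValues]; omega) :=
  List.getD_eq_getElem _ _ _

theorem card_filter_eq_countP_sortedValues (p : ℝ → Prop) [DecidablePred p] :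
    #{i | p (v i)} = (sortedValues v).countP p := by
  rw [← Multiset.coe_countP, sortedValues, Multiset.sort_eq, Multiset.countP_map]
  rfl

theorem le_card_filter_le_kthSmallest {j : ℕ} (hj : 1 ≤ j) (hjn : j ≤ n) :
    j ≤ #{i | v i ≤ kthSmallest j v} := by
  have := (pairwise_sortedValues v).succ_le_countP_le_getElem (j - 1)
    (by rw [length_sortedValues]; omega)
  rw [card_filter_eq_countP_sortedValues v (· ≤ kthSmallest j v), kthSmallest_eq_getElem v hj hjn]
  omega

theorem le_card_filter_kthSmallest_le {k : ℕ} (hk : 1 ≤ k) (hkn : k ≤ n) :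
    n - k + 1 ≤ #{i | kthSmallest k v ≤ v i} := by
  have := (pairwise_sortedValues v).length_sub_le_countP_getElem_le (k - 1)
    (by rw [length_sortedValues]; omega)
  rw [card_filter_eq_countP_sortedValues v (kthSmallest k v ≤ ·), kthSmallest_eq_getElem v hk hkn]
  have := length_sortedValues v
  omega

end kthSmallest

theorem Finset.card_add_card_le_card_inter_add_card_univ {ι : Type*} [Fintype ι]
    [DecidableEq ι] (s t : Finset ι) : #s + #t ≤ #(s ∩ t) + Fintype.card ι := by
  rw [← card_union_add_card_inter, add_comm]
  exact Nat.add_le_add_left (card_le_univ _) _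

theorem sub_add_one_le_card_filter_lt_of_kthSmallest_lt {n : ℕ} (a b : Fin n → ℝ) (ε : ℝ)
    {j k : ℕ} (hj : 1 ≤ j) (hjn : j ≤ n) (hk : 1 ≤ k) (hkn : k ≤ n)
    (hlt : kthSmallest j a + ε < kthSmallest k b) :
    (j : ℤ) - k + 1 ≤ #{i | a i + ε < b i} := by
  set A : Finset (Fin n) := {i | a i ≤ kthSmallest j a}
  set B : Finset (Fin n) := {i | kthSmallest k b ≤ b i}
  have hAB : A ∩ B ⊆ ({i | a i + ε < b i} : Finset (Fin n)) := by
    intro i hi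
    simp only [A, B, mem_inter, mem_filter, mem_univ, true_and] at hi ⊢
    linarith [hi.1, hi.2]
  suffices j + (n - k + 1) ≤ #{i | a i + ε < b i} + n by omega
  calc j + (n - k + 1)
      ≤ #A + #B :=
        add_le_add (le_card_filter_le_kthSmallest a hj hjn) (le_card_filter_kthSmallest_le b hk hkn)
    _ ≤ #(A ∩ B) + n := by simpa using card_add_card_le_card_inter_add_card_univ A B
    _ ≤ #{i | a i + ε < b i} + n := by gcongr

theorem sub_le_natCeil_sub_natCeil_add_one {x : ℝ} (hx : 0 ≤ x) (y : ℝ) :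
    y - x ≤ (⌈y⌉₊ : ℝ) - ⌈x⌉₊ + 1 := by
  linarith [Nat.le_ceil y, Nat.ceil_lt_add_one hx]

theorem stmt14_general (n : ℕ) (a b : Fin n → ℝ) (ε : ℝ) :
    (∀ j k : ℕ, 1 ≤ j → j ≤ n → 1 ≤ k → k ≤ n →
      kthSmallest j a + ε < kthSmallest k b →
      (j : ℤ) - (k : ℤ) + 1 ≤
        ((Finset.univ.filter (fun i : Fin n => a i + ε < b i)).card : ℤ)) ∧
    (∀ α δ : ℝ, α ∈ Set.Ioo (0:ℝ) 1 → δ ∈ Set.Ico (0:ℝ) α →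
      ∀ j k : ℕ, k = ⌈((n:ℝ)+1) * (1-α)⌉₊ → j = ⌈((n:ℝ)+1) * (1-α+δ)⌉₊ →
      ((n:ℝ)+1) * δ ≤ (j : ℝ) - (k : ℝ) + 1) := by
  refine ⟨fun j k hj hjn hk hkn hlt => ?_, fun α δ hα _ j k hk hj => ?_⟩
  · exact sub_add_one_le_card_filter_lt_of_kthSmallest_lt a b ε hj hjn hk hkn hlt
  · have hx : 0 ≤ ((n:ℝ)+1) * (1-α) := mul_nonneg (by positivity) (by linarith [hα.2])
    have := sub_le_natCeil_sub_natCeil_add_one hx (((n:ℝ)+1) * (1-α+δ))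
    rw [hk, hj]
    linarith

/-- Let `(a i, b i)`, `i < n`, be pairs of reals, `ε ∈ ℝ`.
(i) If `j, k ∈ {1, ..., n}` satisfy `b_(k) > a_(j) + ε` (sorted values), then the number of
indices `i` with `b i > a i + ε` is at least `j − k + 1`.
(ii) If `α ∈ (0,1)`, `δ ∈ [0, α)`, `k = ⌈(n + 1)(1 − α)⌉` and `j = ⌈(n + 1)(1 − α + δ)⌉`,
then `j − k + 1 ≥ (n + 1) δ`. -/
theorem stmt14 (n : ℕ) (hn : 1 ≤ n) (a b : Fin n → ℝ) (ε : ℝ) :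
    (∀ j k : ℕ, 1 ≤ j → j ≤ n → 1 ≤ k → k ≤ n →
      kthSmallest j a + ε < kthSmallest k b →
      (j : ℤ) - (k : ℤ) + 1 ≤
        ((Finset.univ.filter (fun i : Fin n => a i + ε < b i)).card : ℤ)) ∧
    (∀ α δ : ℝ, α ∈ Set.Ioo (0:ℝ) 1 → δ ∈ Set.Ico (0:ℝ) α →
      ∀ j k : ℕ, k = ⌈((n:ℝ)+1) * (1-α)⌉₊ → j = ⌈((n:ℝ)+1) * (1-α+δ)⌉₊ →
      ((n:ℝ)+1) * δ ≤ (j : ℝ) - (k : ℝ) + 1) :=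
  stmt14_general n a b ε
end

section
/- Let (ν_n) be a sequence in (0,1) with ν_n → 0, let (B_n) be a sequence of positive reals with ln(1/ν_n) = o(B_n), and let p_n = 1 − (1 − 1/n)^n. Then lim_{n→∞} (p_n + (1 − p_n) ν_n^{1/B_n})^{B_n} = 0. -/
open Filter Asymptotics Topology Real

/-!
Write `x n = log (1 / ν n) / B n → 0` and `q n = (1 - 1/n)^n → e⁻¹`, so that `ν n ^ (1 / B n) = exp (-x n)`
and the base is `1 - q n (1 - exp (-x n))`. By `1 + y ≤ exp y` the power is at most
`exp (-q n · B n (1 - exp (-x n)))`, and, again by `1 + y ≤ exp y`,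
`B n (1 - exp (-x n)) ≥ log (1 / ν n) · exp (-x n) → ∞`.
-/

lemma Real.mul_exp_neg_le_one_sub_exp_neg (x : ℝ) : x * exp (-x) ≤ 1 - exp (-x) := by
  have h := mul_le_mul_of_nonneg_right (add_one_le_exp x) (exp_pos (-x)).le
  rw [← exp_add, add_neg_cancel, exp_zero] at h
  linarith

lemma Real.one_sub_rpow_le_exp_neg_mul {y B : ℝ} (hy : y < 1) (hB : 0 ≤ B) :
    (1 - y) ^ B ≤ exp (-(y * B)) := by
  rw [← neg_mul, exp_mul]
  exact rpow_le_rpow (by linarith) (by linarith [add_one_le_exp (-y)]) hB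

lemma tendsto_one_sub_one_div_pow_exp_neg_one :
    Tendsto (fun n : ℕ => (1 - 1 / (n : ℝ)) ^ n) atTop (𝓝 (exp (-1))) :=
  (tendsto_one_add_div_pow_exp (-1)).congr fun n => by rw [neg_div, ← sub_eq_add_neg]

lemma tendsto_log_one_div_atTop {α : Type*} {l : Filter α} {ν : α → ℝ}
    (hν : ∀ i, 0 < ν i) (hν0 : Tendsto ν l (𝓝 0)) :
    Tendsto (fun i => log (1 / ν i)) l atTop := by
  have hν0' : Tendsto ν l (𝓝[>] 0) :=
    tendsto_nhdsWithin_of_tendsto_nhds_of_eventually_within _ hν0 (Eventually.of_forall hν)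
  simp only [one_div]
  exact tendsto_log_atTop.comp (tendsto_inv_nhdsGT_zero.comp hν0')

lemma rpow_one_div_eq_exp_neg_log_one_div {ν : ℝ} (hν : 0 < ν) (B : ℝ) :
    ν ^ (1 / B) = exp (-(log (1 / ν) / B)) := by
  rw [rpow_def_of_pos hν, one_div ν, log_inv]
  ring_nf

lemma tendsto_mul_one_sub_exp_neg_div_atTop {α : Type*} {l : Filter α} {a B : α → ℝ}
    (hB : ∀ i, 0 < B i) (ha : Tendsto a l atTop) (hab : Tendsto (fun i => a i / B i) l (𝓝 0)) :
    Tendsto (fun i => B i * (1 - exp (-(a i / B i)))) l atTop := by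
  have hexp : Tendsto (fun i => exp (-(a i / B i))) l (𝓝 1) :=
    (continuous_exp.tendsto' 0 1 exp_zero).comp (by simpa using hab.neg)
  refine tendsto_atTop_mono (fun i => ?_) (ha.atTop_mul_pos one_pos hexp)
  have h := mul_le_mul_of_nonneg_left (mul_exp_neg_le_one_sub_exp_neg (a i / B i)) (hB i).le
  rwa [← mul_assoc, mul_div_cancel₀ _ (hB i).ne'] at h

lemma one_sub_one_div_natCast_mem_Icc (n : ℕ) : 1 - 1 / (n : ℝ) ∈ Set.Icc 0 1 := by
  rcases n.eq_zero_or_pos with rfl | hn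
  · simp
  · have h0 : 0 ≤ 1 / (n : ℝ) := by positivity
    refine ⟨?_, by linarith⟩
    rw [sub_nonneg, div_le_one (by positivity)]
    exact_mod_cast hn

lemma Real.one_sub_add_mul_rpow_le_exp {q t B : ℝ} (hq : q ∈ Set.Icc 0 1) (ht : 0 < t)
    (hB : 0 ≤ B) : (1 - q + q * t) ^ B ≤ exp (-(q * (B * (1 - t)))) := by
  have hy : q * (1 - t) < 1 := by nlinarith [hq.1, hq.2, mul_nonneg hq.1 ht.le]
  calc (1 - q + q * t) ^ B = (1 - q * (1 - t)) ^ B := by ring_nf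
    _ ≤ exp (-(q * (1 - t) * B)) := one_sub_rpow_le_exp_neg_mul hy hB
    _ = exp (-(q * (B * (1 - t)))) := by ring_nf

/-- Let `(ν n)` be a sequence in `(0,1)` with `ν n → 0`, `(B n)` a sequence
of positive reals with `log(1/ν n) = o(B n)`, and `p n = 1 − (1 − 1/n)^n`. Then
`(p n + (1 − p n) (ν n)^(1/B n))^(B n) → 0` as `n → ∞`. -/
theorem stmt15 (ν : ℕ → ℝ) (hν : ∀ n, ν n ∈ Set.Ioo (0:ℝ) 1)
    (hν0 : Tendsto ν atTop (nhds 0))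
    (B : ℕ → ℝ) (hB : ∀ n, 0 < B n)
    (ho : (fun n => Real.log (1 / ν n)) =o[atTop] B) :
    Tendsto
      (fun n : ℕ =>
        ((1 - (1 - 1/(n:ℝ))^n) + (1 - 1/(n:ℝ))^n * (ν n) ^ (1 / B n)) ^ (B n))
      atTop (nhds 0) := by
  set q : ℕ → ℝ := fun n => (1 - 1 / (n : ℝ)) ^ n
  have hν_pos n : 0 < ν n := (hν n).1
  have hq n : q n ∈ Set.Icc 0 1 :=
    have h := one_sub_one_div_natCast_mem_Icc n
    ⟨pow_nonneg h.1 n, pow_le_one₀ h.1 h.2⟩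
  have hdecay : Tendsto (fun n => exp (-(q n * (B n * (1 - ν n ^ (1 / B n)))))) atTop (𝓝 0) := by
    simp only [rpow_one_div_eq_exp_neg_log_one_div (hν_pos _)]
    exact tendsto_exp_atBot.comp <| tendsto_neg_atTop_atBot.comp <|
      tendsto_one_sub_one_div_pow_exp_neg_one.pos_mul_atTop (exp_pos _)
        (tendsto_mul_one_sub_exp_neg_div_atTop hB (tendsto_log_one_div_atTop hν_pos hν0)
          ho.tendsto_div_nhds_zero)
  refine tendsto_of_tendsto_of_tendsto_of_le_of_le tendsto_const_nhds hdecay (fun n => ?_)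
    (fun n => one_sub_add_mul_rpow_le_exp (hq n) (rpow_pos_of_pos (hν_pos n) _) (hB n).le)
  have ht := rpow_pos_of_pos (hν_pos n) (1 / B n)
  exact rpow_nonneg (by nlinarith [(hq n).1, (hq n).2]) _
end

section
/- In the symmetric-algorithm setting, suppose the algorithm is (ε, ν)-stable for some ε ≥ 0 and ν ∈ (0,1), and let α satisfy 1/(n+1) ≤ α and α + √ν < 1. Then P(|Y − f̂(X)| ≤ q_{n,α}{r_i} + ε) ≥ 1 − α − 2√ν. -/
open MeasureTheory ProbabilityTheory

/-- For `β ≥ 1/(n+1)`, `q_{n,β}{v}` is the `⌈(1 − β)(n + 1)⌉`-th smallest value among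
`v 0, ..., v (n-1)`. -/
noncomputable def empQuantile {n : ℕ} (β : ℝ) (v : Fin n → ℝ) : ℝ :=
  kthSmallest ⌈(1 - β) * ((n:ℝ) + 1)⌉₊ v

open scoped Finset

/-!
Put the test point last in the exchangeable family `W` of all `n + 1` points and let `ρ l` be the
leave-one-out residual of `A_n` at the `l`-th point of `W`, so that the test residual is
`ρ (n + 1)`. By exchangeability, `ρ (n + 1)` is at most the `j`-th smallest `ρ l` with probability
at least `j / (n + 1)`. For a training point `i`, `ρ i` exceeds `r i` by at most the change of the
prediction at `X_i` when the test point joins the training set; swapping `i` with the test point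
shows that this change exceeds `ε` with probability at most `ν`. By Markov's inequality, outside
an event of probability `√ν` at most `b = ⌊√ν (n + 1)⌋` training points have `ρ i > r i + ε`, and
there the `(k - b)`-th smallest `ρ l` is at most `q_{n,α}{r i} + ε`, where
`k = ⌈(1 - α)(n + 1)⌉` and `(k - b) / (n + 1) ≥ 1 - α - √ν`.
-/

section OrderStatistics

theorem List.Pairwise.getD_le_iff_lt_countP {α : Type*} [LinearOrder α] {l : List α}
    (hl : l.Pairwise (· ≤ ·)) (d : α) {j : ℕ} (hj : j < l.length) (t : α) :
    l.getD j d ≤ t ↔ j < l.countP (· ≤ t) := by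
  induction l generalizing j with
  | nil => simp at hj
  | cons a l ih =>
    obtain ⟨ha, hl⟩ := List.pairwise_cons.1 hl
    by_cases hat : a ≤ t
    · cases j with
      | zero => simp [hat]
      | succ j =>
        rw [List.getD_cons_succ, ih hl (by simpa using hj)]
        simp [hat]
    · have hnone : l.countP (· ≤ t) = 0 :=
        List.countP_eq_zero.2 fun x hx hxt => hat ((ha x hx).trans (by simpa using hxt))
      cases j with
      | zero => simp [hat, hnone]
      | succ j =>
        have hj : j < l.length := by simpa using hj
        rw [List.getD_cons_succ, List.getD_eq_getElem _ _ hj]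
        simpa [hat, hnone] using fun h => hat ((ha _ (List.getElem_mem hj)).trans h)

variable {N k : ℕ}

theorem kthSmallest_le_iff (hk : 1 ≤ k) (hkN : k ≤ N) (v : Fin N → ℝ) (t : ℝ) :
    kthSmallest k v ≤ t ↔ k ≤ #{i | v i ≤ t} := by
  have hsorted := Multiset.pairwise_sort (Multiset.map v Finset.univ.val) (· ≤ ·)
  have hlen : ((Multiset.map v Finset.univ.val).sort (· ≤ ·)).length = N := by simp
  rw [kthSmallest, hsorted.getD_le_iff_lt_countP 0 (by omega), ← Multiset.coe_countP,
    Multiset.sort_eq, Multiset.countP_map]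
  change k - 1 < #{i | v i ≤ t} ↔ _
  omega

theorem measurable_kthSmallest (hk : 1 ≤ k) (hkN : k ≤ N) :
    Measurable (kthSmallest k : (Fin N → ℝ) → ℝ) := by
  refine measurable_of_Iic fun t => ?_
  have hpre : kthSmallest k ⁻¹' Set.Iic t
      = ⋃ (s : Finset (Fin N)) (_ : k ≤ #s), ⋂ i ∈ s, {v : Fin N → ℝ | v i ≤ t} := by
    ext v
    simp only [Set.mem_preimage, Set.mem_Iic, kthSmallest_le_iff hk hkN, Set.mem_iUnion,
      Set.mem_iInter, Set.mem_ofPred_eq]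
    refine ⟨fun h => ⟨_, h, fun i hi => (Finset.mem_filter.1 hi).2⟩, ?_⟩
    rintro ⟨s, hs, hst⟩
    exact hs.trans (Finset.card_le_card fun i hi => by simpa using hst i hi)
  rw [hpre]
  exact .iUnion fun s => .iUnion fun _ =>
    .biInter s.countable_toSet fun i _ => measurableSet_le (measurable_pi_apply i) measurable_const

theorem kthSmallest_comp_perm (v : Fin N → ℝ) (σ : Equiv.Perm (Fin N)) :
    kthSmallest k (v ∘ σ) = kthSmallest k v := by
  rw [kthSmallest, kthSmallest, ← Multiset.map_map, Multiset.map_univ_val_equiv]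

theorem kthSmallest_sub_le_add {M b : ℕ} {f : Fin N → Fin M} (hf : Function.Injective f)
    (w : Fin M → ℝ) (v : Fin N → ℝ) {ε : ℝ} (hbad : #{i | v i + ε < w (f i)} ≤ b)
    (hbk : b < k) (hkN : k ≤ N) : kthSmallest (k - b) w ≤ kthSmallest k v + ε := by
  have hNM : N ≤ M := by simpa using Fintype.card_le_of_injective f hf
  set q := kthSmallest k v
  have hq : k ≤ #{i | v i ≤ q} := (kthSmallest_le_iff (by omega) hkN v q).1 le_rfl
  rw [kthSmallest_le_iff (by omega) (by omega)]
  calc k - b ≤ #(Finset.univ.filter (fun i => v i ≤ q) \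
          Finset.univ.filter (fun i => v i + ε < w (f i))) := by
        have := Finset.le_card_sdiff (Finset.univ.filter fun i => v i + ε < w (f i))
          (Finset.univ.filter fun i => v i ≤ q)
        omega
    _ ≤ #{c | w c ≤ q + ε} := by
        refine Finset.card_le_card_of_injOn f (fun i hi => ?_) hf.injOn
        simp only [Finset.coe_sdiff, Finset.coe_filter, Finset.mem_univ, true_and,
          Set.mem_sdiff, Set.mem_ofPred_eq, not_lt] at hi ⊢
        linarith [hi.1, hi.2]

end OrderStatistics

section Counting

variable {Ω ι : Type*} [Fintype ι]

theorem card_mem_eq_sum_indicator (S : ι → Set Ω) [∀ i, DecidablePred (· ∈ S i)] (ω : Ω) :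
    (#{i | ω ∈ S i} : ℝ) = ∑ i, (S i).indicator 1 ω := by
  rw [Finset.natCast_card_filter]
  simp only [Set.indicator_apply, Pi.one_apply]

variable [MeasurableSpace Ω] {P : Measure Ω} [IsFiniteMeasure P] {S : ι → Set Ω}
  [∀ i, DecidablePred (· ∈ S i)]

theorem integrable_card_mem (hS : ∀ i, MeasurableSet (S i)) :
    Integrable (fun ω => (#{i | ω ∈ S i} : ℝ)) P := by
  simp_rw [card_mem_eq_sum_indicator]
  exact integrable_finsetSum _ fun i _ => (integrable_const 1).indicator (hS i)

theorem integral_card_mem (hS : ∀ i, MeasurableSet (S i)) :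
    ∫ ω, (#{i | ω ∈ S i} : ℝ) ∂P = ∑ i, P.real (S i) := by
  simp_rw [card_mem_eq_sum_indicator]
  rw [integral_finsetSum _ fun i _ => (integrable_const 1).indicator (hS i)]
  simp_rw [integral_indicator_one (hS _)]

theorem le_sum_measureReal_of_le_card [IsProbabilityMeasure P] (hS : ∀ i, MeasurableSet (S i))
    {j : ℕ} (hj : ∀ ω, j ≤ #{i | ω ∈ S i}) : (j : ℝ) ≤ ∑ i, P.real (S i) := by
  calc (j : ℝ) = ∫ _, (j : ℝ) ∂P := by simp
    _ ≤ ∫ ω, (#{i | ω ∈ S i} : ℝ) ∂P :=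
      integral_mono (integrable_const _) (integrable_card_mem hS) fun ω => Nat.cast_le.2 (hj ω)
    _ = ∑ i, P.real (S i) := integral_card_mem hS

theorem mul_measureReal_le_card_le_sum (hS : ∀ i, MeasurableSet (S i)) (c : ℕ) :
    c * P.real {ω | c ≤ #{i | ω ∈ S i}} ≤ ∑ i, P.real (S i) := by
  have := mul_meas_ge_le_integral_of_nonneg (ae_of_all _ fun ω => Nat.cast_nonneg _)
    (integrable_card_mem (P := P) hS) c
  simpa only [Nat.cast_le, integral_card_mem hS] using this

theorem measureReal_floor_lt_card_mem_le (hS : ∀ i, MeasurableSet (S i)) {ν : ℝ} (hν : 0 ≤ ν)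
    (hSν : ∀ i, P.real (S i) ≤ ν) :
    P.real {ω | ⌊√ν * (Fintype.card ι + 1)⌋₊ + 1 ≤ #{i | ω ∈ S i}} ≤ √ν := by
  set b := ⌊√ν * (Fintype.card ι + 1)⌋₊
  have hmarkov := mul_measureReal_le_card_le_sum (P := P) hS (b + 1)
  have hsum : ∑ i, P.real (S i) ≤ Fintype.card ι * ν := by
    simpa using Finset.sum_le_card_nsmul Finset.univ _ ν fun i _ => hSν i
  have hb : √ν * (Fintype.card ι + 1) < b + 1 := Nat.lt_floor_add_one _
  have hcard : Fintype.card ι * ν ≤ (b + 1) * √ν := by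
    nlinarith [Real.mul_self_sqrt hν, Real.sqrt_nonneg ν]
  push_cast at hmarkov
  exact le_of_mul_le_mul_left (hmarkov.trans (hsum.trans hcard)) (by positivity)

end Counting

theorem ProbabilityTheory.iIndepFun.identDistrib_comp_perm {Ω ι E : Type*} [MeasurableSpace Ω]
    [MeasurableSpace E] [Fintype ι] {P : Measure Ω} {Z : ι → Ω → E}
    (hZ : ∀ i, AEMeasurable (Z i) P) (hind : iIndepFun Z P)
    (hident : ∀ i j, IdentDistrib (Z i) (Z j) P P) (τ : Equiv.Perm ι) :
    IdentDistrib (fun ω i => Z (τ i) ω) (fun ω i => Z i ω) P P where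
  aemeasurable_fst := aemeasurable_pi_lambda _ fun i => hZ (τ i)
  aemeasurable_snd := aemeasurable_pi_lambda _ hZ
  map_eq := by
    rw [(hind.precomp τ.injective).map_fun_eq_pi_map fun i => hZ (τ i),
      hind.map_fun_eq_pi_map hZ]
    exact congrArg Measure.pi (funext fun i => (hident (τ i) i).map_eq)

theorem le_mul_measureReal_le_kthSmallest {Ω E : Type*} [MeasurableSpace Ω] [MeasurableSpace E]
    {P : Measure Ω} [IsProbabilityMeasure P] {N j : ℕ} (hj : 1 ≤ j) (hjN : j ≤ N)
    {V : Ω → Fin N → E} (hVm : Measurable V)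
    (hV : ∀ τ : Equiv.Perm (Fin N), IdentDistrib (fun ω => V ω ∘ τ) V P P)
    {s : (Fin N → E) → Fin N → ℝ} (hs : ∀ l, Measurable fun W => s W l)
    (hs_perm : ∀ W (τ : Equiv.Perm (Fin N)), s (W ∘ τ) = s W ∘ τ) (l : Fin N) :
    (j : ℝ) ≤ N * P.real {ω | s (V ω) l ≤ kthSmallest j (s (V ω))} := by
  classical
  set G : Fin N → Set (Fin N → E) := fun c => {W | s W c ≤ kthSmallest j (s W)}
  have hG : ∀ c, MeasurableSet (G c) := fun c =>
    measurableSet_le (hs c) ((measurable_kthSmallest hj hjN).comp (measurable_pi_lambda _ hs))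
  -- by exchangeability the `N` events `V ∈ G c` are equally likely, and at least `j` of them occur
  have hGc : ∀ c, P.real (V ⁻¹' G c) = P.real (V ⁻¹' G l) := fun c => by
    have hswap : (fun ω => V ω ∘ Equiv.swap c l) ⁻¹' G l = V ⁻¹' G c := by
      ext ω
      simp [G, hs_perm, kthSmallest_comp_perm]
    rw [← hswap, measureReal_def, measureReal_def, (hV _).measure_mem_eq (hG l)]
  calc (j : ℝ) ≤ ∑ c, P.real (V ⁻¹' G c) :=
        le_sum_measureReal_of_le_card (fun c => hVm (hG c))
          fun ω => (kthSmallest_le_iff hj hjN _ _).1 le_rfl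
    _ = N * P.real (V ⁻¹' G l) := by simp [hGc]

section SymmetricAlgorithm

variable {𝒳 : Type*} {n : ℕ}

theorem apply_comp_eq_of_range_eq {β γ : Type*} {N : ℕ} {A : (Fin n → β) → γ}
    (hA : ∀ σ : Equiv.Perm (Fin n), ∀ D, A (D ∘ σ) = A D) (W : Fin N → β)
    {f g : Fin n → Fin N} (hf : Function.Injective f) (hg : Function.Injective g)
    (h : Set.range f = Set.range g) : A (W ∘ f) = A (W ∘ g) := by
  let σ : Equiv.Perm (Fin n) :=
    (Equiv.ofInjective f hf).trans ((Equiv.setCongr h).trans (Equiv.ofInjective g hg).symm)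
  have hσ : g ∘ σ = f := funext fun j => Equiv.apply_ofInjective_symm hg _
  rw [← hσ, ← Function.comp_assoc, hA]

def looResidual (A : (Fin n → 𝒳 × ℝ) → 𝒳 → ℝ) (W : Fin (n + 1) → 𝒳 × ℝ) (l : Fin (n + 1)) : ℝ :=
  |(W l).2 - A (W ∘ l.succAbove) (W l).1|

/-- Change of the leave-one-out prediction at the `i`-th point when the last point of `W` is
dropped from the training set. -/
def looGap (An : (Fin (n + 1) → 𝒳 × ℝ) → 𝒳 → ℝ) (Am : (Fin n → 𝒳 × ℝ) → 𝒳 → ℝ)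
    (W : Fin (n + 2) → 𝒳 × ℝ) (i : Fin (n + 1)) : ℝ :=
  |An (W ∘ i.castSucc.succAbove) (W i.castSucc).1
    - Am (W ∘ Fin.castSucc ∘ i.succAbove) (W i.castSucc).1|

theorem looResidual_comp_perm {A : (Fin n → 𝒳 × ℝ) → 𝒳 → ℝ}
    (hA : ∀ σ : Equiv.Perm (Fin n), ∀ D, A (D ∘ σ) = A D) (W : Fin (n + 1) → 𝒳 × ℝ)
    (τ : Equiv.Perm (Fin (n + 1))) : looResidual A (W ∘ τ) = looResidual A W ∘ τ := by
  funext l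
  have hrange : Set.range (τ ∘ l.succAbove) = Set.range (τ l).succAbove := by
    rw [Set.range_comp, Fin.range_succAbove, Fin.range_succAbove, Set.image_compl_eq τ.bijective,
      Set.image_singleton]
  simp only [looResidual, Function.comp_apply]
  rw [Function.comp_assoc, apply_comp_eq_of_range_eq hA W
    (τ.injective.comp Fin.succAbove_right_injective) Fin.succAbove_right_injective hrange]

theorem looResidual_last (A : (Fin n → 𝒳 × ℝ) → 𝒳 → ℝ) (W : Fin (n + 1) → 𝒳 × ℝ) :
    looResidual A W (Fin.last n) =
      |(W (Fin.last n)).2 - A (W ∘ Fin.castSucc) (W (Fin.last n)).1| := by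
  rw [looResidual, Fin.succAbove_last]

theorem looResidual_castSucc_le (An : (Fin (n + 1) → 𝒳 × ℝ) → 𝒳 → ℝ)
    (Am : (Fin n → 𝒳 × ℝ) → 𝒳 → ℝ) (W : Fin (n + 2) → 𝒳 × ℝ) (i : Fin (n + 1)) :
    looResidual An W i.castSucc ≤ looResidual Am (W ∘ Fin.castSucc) i + looGap An Am W i := by
  rw [looResidual, looResidual, looGap, abs_sub_comm (An _ _)]
  exact abs_sub_le _ _ _

theorem looGap_comp_swap {An : (Fin (n + 1) → 𝒳 × ℝ) → 𝒳 → ℝ}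
    (hAn : ∀ σ : Equiv.Perm (Fin (n + 1)), ∀ D, An (D ∘ σ) = An D)
    (Am : (Fin n → 𝒳 × ℝ) → 𝒳 → ℝ) (W : Fin (n + 2) → 𝒳 × ℝ) (i : Fin (n + 1)) :
    looGap An Am (W ∘ Equiv.swap i.castSucc (Fin.last (n + 1))) i =
      |An (W ∘ Fin.castSucc) (W (Fin.last (n + 1))).1
        - Am (W ∘ Fin.castSucc ∘ i.succAbove) (W (Fin.last (n + 1))).1| := by
  set τ := Equiv.swap i.castSucc (Fin.last (n + 1))
  have hfix : τ ∘ Fin.castSucc ∘ i.succAbove = Fin.castSucc ∘ i.succAbove := funext fun j =>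
    Equiv.swap_apply_of_ne_of_ne (fun h => Fin.succAbove_ne i j (Fin.castSucc_injective _ h))
      (Fin.castSucc_lt_last _).ne
  have hrange : Set.range (τ ∘ i.castSucc.succAbove) = Set.range Fin.castSucc := by
    rw [Set.range_comp, Fin.range_succAbove, Set.image_compl_eq τ.bijective, Set.image_singleton,
      Equiv.swap_apply_left, ← Fin.succAbove_last, Fin.range_succAbove]
  simp only [looGap, Function.comp_apply, Function.comp_assoc]
  rw [hfix, Equiv.swap_apply_left, apply_comp_eq_of_range_eq hAn W
    (τ.injective.comp Fin.succAbove_right_injective) (Fin.castSucc_injective _) hrange]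

theorem kthSmallest_looResidual_le {b k : ℕ} (An : (Fin (n + 1) → 𝒳 × ℝ) → 𝒳 → ℝ)
    (Am : (Fin n → 𝒳 × ℝ) → 𝒳 → ℝ) (W : Fin (n + 2) → 𝒳 × ℝ) {ε : ℝ}
    (hgap : #{i | ε < looGap An Am W i} ≤ b) (hbk : b < k) (hkn : k ≤ n + 1) :
    kthSmallest (k - b) (looResidual An W) ≤
      kthSmallest k (looResidual Am (W ∘ Fin.castSucc)) + ε := by
  refine kthSmallest_sub_le_add (Fin.castSucc_injective _) _ _
    ((Finset.card_le_card fun i hi => ?_).trans hgap) hbk hkn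
  simp only [Finset.mem_filter, Finset.mem_univ, true_and] at hi ⊢
  linarith [looResidual_castSucc_le An Am W i]

variable [MeasurableSpace 𝒳]

theorem measurable_looResidual {A : (Fin n → 𝒳 × ℝ) → 𝒳 → ℝ}
    (hA : Measurable fun p : (Fin n → 𝒳 × ℝ) × 𝒳 => A p.1 p.2) (l : Fin (n + 1)) :
    Measurable fun W => looResidual A W l := by
  unfold looResidual
  fun_prop

theorem measurable_looGap {An : (Fin (n + 1) → 𝒳 × ℝ) → 𝒳 → ℝ} {Am : (Fin n → 𝒳 × ℝ) → 𝒳 → ℝ}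
    (hAn : Measurable fun p : (Fin (n + 1) → 𝒳 × ℝ) × 𝒳 => An p.1 p.2)
    (hAm : Measurable fun p : (Fin n → 𝒳 × ℝ) × 𝒳 => Am p.1 p.2) (i : Fin (n + 1)) :
    Measurable fun W => looGap An Am W i := by
  unfold looGap
  fun_prop

end SymmetricAlgorithm

theorem measure_looGap_gt_eq {𝒳 Ω : Type*} [MeasurableSpace 𝒳] [MeasurableSpace Ω]
    {P : Measure Ω} {n : ℕ} {V : Ω → Fin (n + 2) → 𝒳 × ℝ}
    (hV : ∀ τ : Equiv.Perm (Fin (n + 2)), IdentDistrib (fun ω => V ω ∘ τ) V P P)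
    {An : (Fin (n + 1) → 𝒳 × ℝ) → 𝒳 → ℝ} {Am : (Fin n → 𝒳 × ℝ) → 𝒳 → ℝ}
    (hAnSymm : ∀ σ : Equiv.Perm (Fin (n + 1)), ∀ D, An (D ∘ σ) = An D)
    (hAnMeas : Measurable fun p : (Fin (n + 1) → 𝒳 × ℝ) × 𝒳 => An p.1 p.2)
    (hAmMeas : Measurable fun p : (Fin n → 𝒳 × ℝ) × 𝒳 => Am p.1 p.2) (ε : ℝ) (i : Fin (n + 1)) :
    P {ω | ε < looGap An Am (V ω) i} =
      P {ω | ε < |An (V ω ∘ Fin.castSucc) (V ω (Fin.last (n + 1))).1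
        - Am (V ω ∘ Fin.castSucc ∘ i.succAbove) (V ω (Fin.last (n + 1))).1|} := by
  have h := (hV (Equiv.swap i.castSucc (Fin.last (n + 1)))).measure_mem_eq
    (measurableSet_lt (measurable_const (a := ε)) (measurable_looGap hAnMeas hAmMeas i))
  simp only [Set.preimage_ofPred_eq, looGap_comp_swap hAnSymm] at h
  exact h.symm

theorem floor_lt_ceil_and_ceil_le {N : ℕ} {α s : ℝ} (hs : 0 ≤ s) (hα : 1 / ((N : ℝ) + 1) ≤ α)
    (h : α + s < 1) :
    ⌊s * ((N : ℝ) + 1)⌋₊ < ⌈(1 - α) * ((N : ℝ) + 1)⌉₊ ∧ ⌈(1 - α) * ((N : ℝ) + 1)⌉₊ ≤ N := by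
  have hN : (0 : ℝ) < N + 1 := by positivity
  rw [div_le_iff₀ hN] at hα
  refine ⟨Nat.cast_lt.1 ((Nat.floor_le (by positivity)).trans_lt ?_), Nat.ceil_le.2 (by linarith)⟩
  exact lt_of_lt_of_le (by nlinarith) (Nat.le_ceil _)

theorem jackknife_coverage_of_exchangeable {𝒳 Ω : Type*} [MeasurableSpace 𝒳] [MeasurableSpace Ω]
    {P : Measure Ω} [IsProbabilityMeasure P] {n : ℕ} {V : Ω → Fin (n + 2) → 𝒳 × ℝ}
    (hVm : Measurable V)
    (hV : ∀ τ : Equiv.Perm (Fin (n + 2)), IdentDistrib (fun ω => V ω ∘ τ) V P P)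
    {An : (Fin (n + 1) → 𝒳 × ℝ) → 𝒳 → ℝ} {Am : (Fin n → 𝒳 × ℝ) → 𝒳 → ℝ}
    (hAnSymm : ∀ σ : Equiv.Perm (Fin (n + 1)), ∀ D, An (D ∘ σ) = An D)
    (hAnMeas : Measurable fun p : (Fin (n + 1) → 𝒳 × ℝ) × 𝒳 => An p.1 p.2)
    (hAmMeas : Measurable fun p : (Fin n → 𝒳 × ℝ) × 𝒳 => Am p.1 p.2) {ε ν : ℝ} (hν : 0 ≤ ν)
    (hstable : ∀ i, P.real {ω | ε < looGap An Am (V ω) i} ≤ ν)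
    {α : ℝ} (hα1 : 1 / ((n : ℝ) + 2) ≤ α) (hα2 : α + √ν < 1) :
    1 - α - 2 * √ν ≤ P.real {ω |
      |(V ω (Fin.last (n + 1))).2 - An (V ω ∘ Fin.castSucc) (V ω (Fin.last (n + 1))).1|
        ≤ empQuantile α (looResidual Am (V ω ∘ Fin.castSucc)) + ε} := by
  have hN : ((n + 1 : ℕ) : ℝ) + 1 = n + 2 := by push_cast; ring
  obtain ⟨hbk, hkn⟩ := floor_lt_ceil_and_ceil_le (Real.sqrt_nonneg ν) (hN ▸ hα1) hα2
  have hk : (1 - α) * (n + 2) ≤ ⌈(1 - α) * (((n + 1 : ℕ) : ℝ) + 1)⌉₊ := by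
    rw [← hN]
    exact Nat.le_ceil _
  have hb : ⌊√ν * (((n + 1 : ℕ) : ℝ) + 1)⌋₊ ≤ √ν * (n + 2) := by
    rw [← hN]
    exact Nat.floor_le (by positivity)
  have hunstable := measureReal_floor_lt_card_mem_le (P := P)
    (S := fun i => {ω | ε < looGap An Am (V ω) i})
    (fun i => measurableSet_lt measurable_const ((measurable_looGap hAnMeas hAmMeas i).comp hVm))
    hν hstable
  rw [Fintype.card_fin] at hunstable
  unfold empQuantile
  generalize ⌈(1 - α) * (((n + 1 : ℕ) : ℝ) + 1)⌉₊ = k at hbk hkn hk ⊢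
  generalize ⌊√ν * (((n + 1 : ℕ) : ℝ) + 1)⌋₊ = b at hbk hb hunstable
  have hcov := le_mul_measureReal_le_kthSmallest (j := k - b) (by omega) (by omega) hVm hV
    (measurable_looResidual hAnMeas) (looResidual_comp_perm hAnSymm) (Fin.last (n + 1))
  rw [Nat.cast_sub hbk.le] at hcov
  push_cast at hcov
  have hcov' : 1 - α - √ν ≤ P.real
      {ω | looResidual An (V ω) (Fin.last (n + 1)) ≤ kthSmallest (k - b) (looResidual An (V ω))} :=
    le_of_mul_le_mul_left (by linarith : ((n : ℝ) + 2) * _ ≤ _) (by positivity)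
  refine (by linarith : _ ≤ _ - √ν).trans (sub_le_iff_le_add.2 ?_)
  refine (measureReal_mono fun ω hω => ?_).trans
    ((measureReal_union_le _ _).trans (add_le_add_right hunstable _))
  refine or_iff_not_imp_right.2 fun hstab => ?_
  rw [Set.mem_ofPred_eq, looResidual_last] at hω
  exact hω.trans <|
    kthSmallest_looResidual_le An Am (V ω) (Nat.lt_add_one_iff.1 (not_le.1 hstab)) hbk hkn

theorem stmt17_general {𝒳 : Type*} [MeasurableSpace 𝒳]
    {Ω : Type*} [MeasurableSpace Ω] (P : Measure Ω) [IsProbabilityMeasure P]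
    (m : ℕ)
    (An : (Fin (m+1) → 𝒳 × ℝ) → 𝒳 → ℝ)
    (Am : (Fin m → 𝒳 × ℝ) → 𝒳 → ℝ)
    (hAnMeas : Measurable (fun p : (Fin (m+1) → 𝒳 × ℝ) × 𝒳 => An p.1 p.2))
    (hAmMeas : Measurable (fun p : (Fin m → 𝒳 × ℝ) × 𝒳 => Am p.1 p.2))
    (hAnSymm : ∀ σ : Equiv.Perm (Fin (m+1)), ∀ D, An (D ∘ σ) = An D)
    (Z : Fin (m+2) → Ω → 𝒳 × ℝ)
    (hZmeas : ∀ i, Measurable (Z i))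
    (hindep : iIndepFun Z P)
    (hident : ∀ i, IdentDistrib (Z i) (Z 0) P P)
    (ε ν : ℝ) (hν : ν ∈ Set.Ioo (0:ℝ) 1)
    (hstable : ∀ i : Fin (m+1),
      P {ω | ε <
          |An (fun j : Fin (m+1) => Z j.castSucc ω) ((Z (Fin.last (m+1)) ω).1)
            - Am (fun j : Fin m => Z ((i.succAbove j).castSucc) ω)
                ((Z (Fin.last (m+1)) ω).1)|}
        ≤ ENNReal.ofReal ν)
    (α : ℝ) (hα1 : 1/((m:ℝ)+2) ≤ α) (hα2 : α + Real.sqrt ν < 1) :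
    1 - α - 2 * Real.sqrt ν ≤
      (P {ω |
        |(Z (Fin.last (m+1)) ω).2
            - An (fun j : Fin (m+1) => Z j.castSucc ω) ((Z (Fin.last (m+1)) ω).1)|
          ≤ empQuantile α
              (fun i : Fin (m+1) =>
                |(Z i.castSucc ω).2
                  - Am (fun j : Fin m => Z ((i.succAbove j).castSucc) ω)
                      ((Z i.castSucc ω).1)|)
            + ε}).toReal := by
  set V : Ω → Fin (m + 2) → 𝒳 × ℝ := fun ω i => Z i ω
  have hexch : ∀ τ : Equiv.Perm (Fin (m + 2)), IdentDistrib (fun ω => V ω ∘ τ) V P P :=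
    hindep.identDistrib_comp_perm (fun i => (hZmeas i).aemeasurable)
      fun i j => (hident i).trans (hident j).symm
  exact jackknife_coverage_of_exchangeable (measurable_pi_lambda _ hZmeas) hexch hAnSymm hAnMeas
    hAmMeas hν.1.le (fun i => ENNReal.toReal_le_of_le_ofReal hν.1.le
      ((measure_looGap_gt_eq hexch hAnSymm hAnMeas hAmMeas ε i).trans_le (hstable i))) hα1 hα2

/-- **jackknife coverage lower bound for stable symmetric algorithms.**
Setting: `n = m + 1 ≥ 2` training points `Z i.castSucc`, `i : Fin (m+1)`, and a test point
`(X, Y) = Z (last)`, all i.i.d. in `𝒳 × ℝ`. `An` (on `n` points) and `Am` (on `n − 1` points)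
form a symmetric regression algorithm: jointly measurable in (data, test point) and invariant
under permutations of the data. `f̂ ω = An (training data)`, and for `i : Fin (m+1)` the
leave-one-out predictor is `Am` applied to the training data with the `i`-th point removed,
with LOO error `r i ω = |Y_i − f̂^{−i}(X_i)|`. Assuming `(ε, ν)`-stability,
`P(|f̂(X) − f̂^{−i}(X)| > ε) ≤ ν` for all `i`, and `1/(n+1) ≤ α`, `α + √ν < 1`, we get
`P(|Y − f̂(X)| ≤ q_{n,α}{r i} + ε) ≥ 1 − α − 2√ν`. -/
theorem stmt17 {𝒳 : Type*} [MeasurableSpace 𝒳]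
    {Ω : Type*} [MeasurableSpace Ω] (P : Measure Ω) [IsProbabilityMeasure P]
    (m : ℕ) (hm : 1 ≤ m)
    (An : (Fin (m+1) → 𝒳 × ℝ) → 𝒳 → ℝ)
    (Am : (Fin m → 𝒳 × ℝ) → 𝒳 → ℝ)
    (hAnMeas : Measurable (fun p : (Fin (m+1) → 𝒳 × ℝ) × 𝒳 => An p.1 p.2))
    (hAmMeas : Measurable (fun p : (Fin m → 𝒳 × ℝ) × 𝒳 => Am p.1 p.2))
    (hAnSymm : ∀ σ : Equiv.Perm (Fin (m+1)), ∀ D, An (D ∘ σ) = An D)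
    (hAmSymm : ∀ σ : Equiv.Perm (Fin m), ∀ D, Am (D ∘ σ) = Am D)
    (Z : Fin (m+2) → Ω → 𝒳 × ℝ)
    (hZmeas : ∀ i, Measurable (Z i))
    (hindep : iIndepFun Z P)
    (hident : ∀ i, IdentDistrib (Z i) (Z 0) P P)
    (ε ν : ℝ) (hε : 0 ≤ ε) (hν : ν ∈ Set.Ioo (0:ℝ) 1)
    (hstable : ∀ i : Fin (m+1),
      P {ω | ε <
          |An (fun j : Fin (m+1) => Z j.castSucc ω) ((Z (Fin.last (m+1)) ω).1)
            - Am (fun j : Fin m => Z ((i.succAbove j).castSucc) ω)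
                ((Z (Fin.last (m+1)) ω).1)|}
        ≤ ENNReal.ofReal ν)
    (α : ℝ) (hα1 : 1/((m:ℝ)+2) ≤ α) (hα2 : α + Real.sqrt ν < 1) :
    1 - α - 2 * Real.sqrt ν ≤
      (P {ω |
        |(Z (Fin.last (m+1)) ω).2
            - An (fun j : Fin (m+1) => Z j.castSucc ω) ((Z (Fin.last (m+1)) ω).1)|
          ≤ empQuantile α
              (fun i : Fin (m+1) =>
                |(Z i.castSucc ω).2
                  - Am (fun j : Fin m => Z ((i.succAbove j).castSucc) ω)
                      ((Z i.castSucc ω).1)|)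
            + ε}).toReal :=
  stmt17_general P m An Am hAnMeas hAmMeas hAnSymm Z hZmeas hindep hident ε ν hν hstable α hα1 hα2
end

section
/- Let α ∈ (0,1), let n_0 ≥ 1, and for each n let F_n : ℝ → [0,1] be nondecreasing, with the family {F_n : n ≥ n_0} uniformly equicontinuous. For each n, let Q_n be a real random variable, and let (ε_n) and (ν_n) be sequences of nonnegative reals converging to 0 such that for all n, E[F_n(Q_n + ε_n)] ≥ 1 − α − ν_n and E[F_n(Q_n − ε_n)] ≤ 1 − α + 1/(n + 1) + ν_n. Then lim_{n→∞} E[F_n(Q_n)] = 1 − α. -/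
/-!
Shifting the argument of `F n` by at most `δ` moves `E[F n (Q n)]` by at most the modulus of
uniform equicontinuity, so `E[F n (Q n ± e n)] - E[F n (Q n)] → 0` because `e n → 0`. The two
hypotheses then squeeze `E[F n (Q n)]` between `1 - α - v n - o(1)` and
`1 - α + 1/(n+1) + v n + o(1)`.
-/

open MeasureTheory Filter Topology

section

variable {ι Ω : Type*} [MeasurableSpace Ω] {P : Measure Ω} [IsProbabilityMeasure P]

lemma abs_integral_sub_integral_le {f g : Ω → ℝ} (hf : Integrable f P) (hg : Integrable g P)
    {η : ℝ} (h : ∀ ω, |f ω - g ω| ≤ η) : |∫ ω, f ω ∂P - ∫ ω, g ω ∂P| ≤ η := by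
  rw [← integral_sub hf hg]
  simpa using
    norm_integral_le_of_norm_le_const (μ := P) (f := fun ω => f ω - g ω) (ae_of_all _ h)

lemma tendsto_integral_comp_add_sub_integral {l : Filter ι} {F : ι → ℝ → ℝ} {Q : ι → Ω → ℝ}
    {C : ℝ} (hF : ∀ i, Measurable (F i)) (hQ : ∀ i, Measurable (Q i))
    (hbdd : ∀ i t, |F i t| ≤ C)
    (huec : ∀ η : ℝ, 0 < η → ∃ δ : ℝ, 0 < δ ∧
      ∀ᶠ i in l, ∀ s t : ℝ, |s - t| ≤ δ → |F i s - F i t| ≤ η)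
    {c : ι → ℝ} (hc : Tendsto c l (𝓝 0)) :
    Tendsto (fun i => ∫ ω, F i (Q i ω + c i) ∂P - ∫ ω, F i (Q i ω) ∂P) l (𝓝 0) := by
  have hint : ∀ i (X : Ω → ℝ), Measurable X → Integrable (fun ω => F i (X ω)) P :=
    fun i X hX => .of_bound ((hF i).comp hX).aestronglyMeasurable C
      (ae_of_all _ fun ω => hbdd i (X ω))
  rw [Metric.tendsto_nhds]
  intro ε hε
  obtain ⟨δ, hδ, hFδ⟩ := huec (ε / 2) (half_pos hε)
  have hcδ : ∀ᶠ i in l, |c i| < δ := by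
    simpa using (Metric.tendsto_nhds.mp hc) δ hδ
  filter_upwards [hFδ, hcδ] with i hFi hci
  rw [Real.dist_0_eq_abs]
  refine lt_of_le_of_lt ?_ (half_lt_self hε)
  refine abs_integral_sub_integral_le (hint i _ ((hQ i).add_const _)) (hint i _ (hQ i))
    fun ω => hFi _ _ ?_
  simpa using hci.le

end

theorem stmt19_general {Ω : Type*} [MeasurableSpace Ω] (P : Measure Ω) [IsProbabilityMeasure P]
    (α : ℝ)
    (n₀ : ℕ)
    (F : ℕ → ℝ → ℝ)
    (hrange : ∀ n t, F n t ∈ Set.Icc (0:ℝ) 1)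
    (hmono : ∀ n, Monotone (F n))
    (huec : ∀ η : ℝ, 0 < η → ∃ δ : ℝ, 0 < δ ∧
      ∀ n, n₀ ≤ n → ∀ s t : ℝ, |s - t| ≤ δ → |F n s - F n t| ≤ η)
    (Q : ℕ → Ω → ℝ) (hQ : ∀ n, Measurable (Q n))
    (e v : ℕ → ℝ)
    (he0 : Tendsto e atTop (nhds 0)) (hv0 : Tendsto v atTop (nhds 0))
    (hlow : ∀ n, 1 - α - v n ≤ ∫ ω, F n (Q n ω + e n) ∂P)
    (hup : ∀ n, ∫ ω, F n (Q n ω - e n) ∂P ≤ 1 - α + 1/((n:ℝ)+1) + v n) :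
    Tendsto (fun n => ∫ ω, F n (Q n ω) ∂P) atTop (nhds (1 - α)) := by
  have hbdd : ∀ n t, |F n t| ≤ 1 := fun n t =>
    abs_le.2 ⟨by linarith [(hrange n t).1], (hrange n t).2⟩
  have huec' : ∀ η : ℝ, 0 < η → ∃ δ : ℝ, 0 < δ ∧
      ∀ᶠ n in atTop, ∀ s t : ℝ, |s - t| ≤ δ → |F n s - F n t| ≤ η := fun η hη =>
    let ⟨δ, hδ, hF⟩ := huec η hη
    ⟨δ, hδ, eventually_atTop.2 ⟨n₀, hF⟩⟩
  have hshift {c : ℕ → ℝ} (hc : Tendsto c atTop (𝓝 0)) :=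
    tendsto_integral_comp_add_sub_integral (P := P) (fun n => (hmono n).measurable) hQ hbdd
      huec' hc
  have hplus := hshift he0
  have hminus := hshift (c := fun n => -e n) (by simpa using he0.neg)
  simp only [← sub_eq_add_neg] at hminus
  refine tendsto_of_tendsto_of_tendsto_of_le_of_le
    (g := fun n => 1 - α - v n - (∫ ω, F n (Q n ω + e n) ∂P - ∫ ω, F n (Q n ω) ∂P))
    (h := fun n => 1 - α + 1 / ((n:ℝ) + 1) + v n
      - (∫ ω, F n (Q n ω - e n) ∂P - ∫ ω, F n (Q n ω) ∂P)) ?_ ?_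
    (fun n => by linarith [hlow n]) (fun n => by linarith [hup n])
  · simpa using (tendsto_const_nhds.sub hv0).sub hplus
  · simpa using ((tendsto_const_nhds.add tendsto_one_div_add_atTop_nhds_zero_nat).add hv0).sub
      hminus

/-- Let `α ∈ (0,1)`, `n₀ ≥ 1`, and for each `n` let `F n : ℝ → [0,1]` be
nondecreasing, with the family `{F n : n ≥ n₀}` uniformly equicontinuous. For each `n`, let
`Q n` be a real random variable, and let `(e n)` and `(v n)` be nonnegative sequences
converging to `0` such that `E[F n (Q n + e n)] ≥ 1 − α − v n` and
`E[F n (Q n − e n)] ≤ 1 − α + 1/(n + 1) + v n` for all `n`. Then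
`E[F n (Q n)] → 1 − α` as `n → ∞`. -/
theorem stmt19 {Ω : Type*} [MeasurableSpace Ω] (P : Measure Ω) [IsProbabilityMeasure P]
    (α : ℝ) (hα : α ∈ Set.Ioo (0:ℝ) 1)
    (n₀ : ℕ) (hn₀ : 1 ≤ n₀)
    (F : ℕ → ℝ → ℝ)
    (hrange : ∀ n t, F n t ∈ Set.Icc (0:ℝ) 1)
    (hmono : ∀ n, Monotone (F n))
    (huec : ∀ η : ℝ, 0 < η → ∃ δ : ℝ, 0 < δ ∧
      ∀ n, n₀ ≤ n → ∀ s t : ℝ, |s - t| ≤ δ → |F n s - F n t| ≤ η)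
    (Q : ℕ → Ω → ℝ) (hQ : ∀ n, Measurable (Q n))
    (e v : ℕ → ℝ) (he : ∀ n, 0 ≤ e n) (hv : ∀ n, 0 ≤ v n)
    (he0 : Tendsto e atTop (nhds 0)) (hv0 : Tendsto v atTop (nhds 0))
    (hlow : ∀ n, 1 - α - v n ≤ ∫ ω, F n (Q n ω + e n) ∂P)
    (hup : ∀ n, ∫ ω, F n (Q n ω - e n) ∂P ≤ 1 - α + 1/((n:ℝ)+1) + v n) :
    Tendsto (fun n => ∫ ω, F n (Q n ω) ∂P) atTop (nhds (1 - α)) :=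
  stmt19_general P α n₀ F hrange hmono huec Q hQ e v he0 hv0 hlow hup
end
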